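/- arXiv:2603.06427 — 2 statements merged into one kernel-verified Lean document; each statement's English description precedes it below -/
import Mathlib

section
/- There exist constants M, L > 0, depending only on the sup-norms and the Lipschitz constants of f, g₁, …, g_m, with the following property: for every extended process z̄ = (S̄, w̄⁰, w̄, ȳ⁰, ȳ, β̄) and every extended process z = (S, w⁰, w, y⁰, y, β) one has (i) ‖y⁰ − ȳ⁰‖_{L^∞([0,∞))} ≤ ∫₀^{max(S,S̄)} |w⁰(s) − w̄⁰(s)| ds ≤ d̃(z, z̄); (ii) ‖β − β̄‖_{L^∞([0,∞))} ≤ ∫₀^{max(S,S̄)} |w(s) − w̄(s)| ds ≤ d̃(z, z̄); and (iii) ‖y − ȳ‖_{L^∞([0,∞))} ≤ M e^{L R̄} d̃(z, z̄), where R̄ := ȳ⁰(S̄) + β̄(S̄). -/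
open MeasureTheory Set Filter
open scoped ENNReal InnerProductSpace BigOperators

noncomputable section

/-- `Vec k` is the Euclidean space `ℝ^k`. -/
abbrev Vec (k : ℕ) : Type := EuclideanSpace ℝ (Fin k)

/-- Raw data of an extended process `(S, w⁰, w, y⁰, y, β)`. -/
structure RawProc (n m : ℕ) where
  S : ℝ
  w0 : ℝ → ℝ
  w : ℝ → Vec m
  y0 : ℝ → ℝ
  y : ℝ → Vec n
  β : ℝ → ℝ

/-- Lebesgue measure restricted to `[0,S]`. -/
def μres (S : ℝ) : Measure ℝ := volume.restrict (Icc 0 S)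

/-- `Γ` is a cone (closed under multiplication by nonnegative scalars). -/
def IsConeIn {F : Type*} [SMul ℝ F] (Γ : Set F) : Prop :=
  ∀ c : ℝ, 0 ≤ c → ∀ v ∈ Γ, c • v ∈ Γ

/-- The vector fields `f, g₁, …, g_m` are `C¹` and bounded together with their
first derivatives. -/
def GoodDyn {n m : ℕ} (f : Vec n → Vec n) (g : Fin m → Vec n → Vec n) : Prop :=
  ContDiff ℝ 1 f ∧ (∀ i, ContDiff ℝ 1 (g i)) ∧
  ∃ M : ℝ, (∀ x, ‖f x‖ ≤ M) ∧ (∀ i x, ‖g i x‖ ≤ M) ∧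
    (∀ x, ‖fderiv ℝ f x‖ ≤ M) ∧ (∀ i x, ‖fderiv ℝ (g i) x‖ ≤ M)

variable {n m : ℕ}

/-- `z = (S, w⁰, w, y⁰, y, β)` is an extended process for the dynamics `f, g`,
control cone `C` and initial point `x0`. -/
def IsExtProcess (f : Vec n → Vec n) (g : Fin m → Vec n → Vec n)
    (C : Set (Vec m)) (x0 : Vec n) (z : RawProc n m) : Prop :=
  0 < z.S ∧ Measurable z.w0 ∧ Measurable z.w ∧
  (∃ M : ℝ, ∀ᵐ s ∂μres z.S, |z.w0 s| + ‖z.w s‖ ≤ M) ∧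
  (∀ᵐ s ∂μres z.S, 0 ≤ z.w0 s ∧ z.w s ∈ C) ∧
  (∃ c : ℝ, 0 < c ∧ ∀ᵐ s ∂μres z.S, c ≤ z.w0 s + ‖z.w s‖) ∧
  (∀ s, s ∉ Ico (0:ℝ) z.S → z.w0 s = 0 ∧ z.w s = 0) ∧
  (∀ s ∈ Icc (0:ℝ) z.S, z.y0 s = ∫ t in (0:ℝ)..s, z.w0 t) ∧
  (∀ s ∈ Icc (0:ℝ) z.S, z.y s = x0 + ∫ t in (0:ℝ)..s,
      (z.w0 t • f (z.y t) + ∑ i, z.w t i • g i (z.y t))) ∧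
  (∀ s ∈ Icc (0:ℝ) z.S, z.β s = ∫ t in (0:ℝ)..s, ‖z.w t‖) ∧
  (∀ s, z.S ≤ s → z.y0 s = z.y0 z.S ∧ z.y s = z.y z.S ∧ z.β s = z.β z.S)

/-- Embedded strict-sense process: `w⁰ > 0` a.e. on `[0,S]`. -/
def IsEmbedded (z : RawProc n m) : Prop := ∀ᵐ s ∂μres z.S, 0 < z.w0 s

/-- Canonical process: `w⁰ + |w| = 1` a.e. on `[0,S]`. -/
def IsCanonical (z : RawProc n m) : Prop := ∀ᵐ s ∂μres z.S, z.w0 s + ‖z.w s‖ = 1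

/-- Feasibility: endpoint in the target and energy bounded by `K`. -/
def Feasible (Tgt : Set (ℝ × Vec n)) (K : ℝ≥0∞) (z : RawProc n m) : Prop :=
  (z.y0 z.S, z.y z.S) ∈ Tgt ∧ ENNReal.ofReal (z.β z.S) ≤ K

/-- The control distance `d̃`. -/
def dtil (z1 z2 : RawProc n m) : ℝ :=
  |z1.S - z2.S| +
    ∫ s in (0:ℝ)..(max z1.S z2.S), (|z1.w0 s - z2.w0 s| + ‖z1.w s - z2.w s‖)

/-- The control distance `d` (Euclidean norm of the control pair, integrated on
`[0, S₁ ∧ S₂]`). -/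
def dcan (z1 z2 : RawProc n m) : ℝ :=
  |z1.S - z2.S| +
    ∫ s in (0:ℝ)..(min z1.S z2.S),
      Real.sqrt ((z1.w0 s - z2.w0 s) ^ 2 + ‖z1.w s - z2.w s‖ ^ 2)

/-- `σ` realizes `z` as a time-reparametrization of `zt`. -/
def TimeChangeOf (z zt : RawProc n m) (σ : ℝ → ℝ) : Prop :=
  StrictMonoOn σ (Icc 0 z.S) ∧ σ '' Icc 0 z.S = Icc 0 zt.S ∧
  (∃ L1 > (0:ℝ), ∃ L2 : ℝ, ∀ s ∈ Icc (0:ℝ) z.S, ∀ t ∈ Icc (0:ℝ) z.S,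
      L1 * |s - t| ≤ |σ s - σ t| ∧ |σ s - σ t| ≤ L2 * |s - t|) ∧
  (∀ᵐ s ∂μres z.S, DifferentiableAt ℝ σ s ∧
      z.w0 s = zt.w0 (σ s) * deriv σ s ∧ z.w s = deriv σ s • zt.w (σ s)) ∧
  (∀ s ∈ Icc (0:ℝ) z.S, z.y0 s = zt.y0 (σ s) ∧ z.y s = zt.y (σ s) ∧ z.β s = zt.β (σ s))

/-- Equivalence of extended processes. -/
def EquivProc (z zt : RawProc n m) : Prop := ∃ σ : ℝ → ℝ, TimeChangeOf z zt σ

/-- Local infimum gap at `zb` with respect to `(X^𝒮_{W̃₊}, d̃)`. -/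
def GapTil (f : Vec n → Vec n) (g : Fin m → Vec n → Vec n) (C : Set (Vec m)) (x0 : Vec n)
    (Tgt : Set (ℝ × Vec n)) (K : ℝ≥0∞) (Ψ : ℝ × Vec n → ℝ) (zb : RawProc n m) : Prop :=
  ∃ r > (0:ℝ), ∃ ε > (0:ℝ), ∀ z : RawProc n m,
    IsExtProcess f g C x0 z → IsEmbedded z → Feasible Tgt K z → dtil z zb < r →
      Ψ (zb.y0 zb.S, zb.y zb.S) + ε ≤ Ψ (z.y0 z.S, z.y z.S)

/-- Local infimum gap at `zb` with respect to `(X^𝒮_{W₊}, d)` (canonical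
embedded strict-sense processes only). -/
def GapCan (f : Vec n → Vec n) (g : Fin m → Vec n → Vec n) (C : Set (Vec m)) (x0 : Vec n)
    (Tgt : Set (ℝ × Vec n)) (K : ℝ≥0∞) (Ψ : ℝ × Vec n → ℝ) (zb : RawProc n m) : Prop :=
  ∃ r > (0:ℝ), ∃ ε > (0:ℝ), ∀ z : RawProc n m,
    IsExtProcess f g C x0 z → IsEmbedded z → IsCanonical z → Feasible Tgt K z →
      dcan z zb < r → Ψ (zb.y0 zb.S, zb.y zb.S) + ε ≤ Ψ (z.y0 z.S, z.y z.S)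

/-- Raw data of a strict-sense process `(T, u, x, 𝓋)`. -/
structure RawStrict (n m : ℕ) where
  T : ℝ
  u : ℝ → Vec m
  x : ℝ → Vec n
  v : ℝ → ℝ

/-- `(T, u, x, 𝓋)` is a strict-sense process. -/
def IsStrictProcess (f : Vec n → Vec n) (g : Fin m → Vec n → Vec n)
    (C : Set (Vec m)) (x0 : Vec n) (P : RawStrict n m) : Prop :=
  0 < P.T ∧ Measurable P.u ∧ IntegrableOn P.u (Icc 0 P.T) ∧
  (∀ᵐ t ∂μres P.T, P.u t ∈ C) ∧
  (∀ t ∈ Icc (0:ℝ) P.T,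
      P.x t = x0 + ∫ τ in (0:ℝ)..t, (f (P.x τ) + ∑ i, P.u τ i • g i (P.x τ))) ∧
  (∀ t ∈ Icc (0:ℝ) P.T, P.v t = ∫ τ in (0:ℝ)..t, ‖P.u τ‖)

/-- Lie bracket `[h,k] = Dk·h − Dh·k` of two vector fields. -/
def lieB {n : ℕ} (h k : Vec n → Vec n) : Vec n → Vec n :=
  fun x => fderiv ℝ k x (h x) - fderiv ℝ h x (k x)

/-- Iterated Lie brackets of the vector fields `g₁, …, g_{m₁}`. -/
inductive IterLie {n m : ℕ} (g : Fin m → Vec n → Vec n) (m1 : ℕ) : (Vec n → Vec n) → Prop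
  | base (i : Fin m) (hi : (i : ℕ) < m1) : IterLie g m1 (g i)
  | brk {h k : Vec n → Vec n} : IterLie g m1 h → IterLie g m1 k → IterLie g m1 (lieB h k)

/-- The extended control set `Ĉ`. -/
def Chat {m : ℕ} (C : Set (Vec m)) : Set (ℝ × Vec m) :=
  closure {c : ℝ × Vec m | 0 < c.1 ∧ c.2 ∈ C ∧ c.1 + ‖c.2‖ = 1}

/-- The unmaximized Hamiltonian. -/
def Hham {n m : ℕ} (f : Vec n → Vec n) (g : Fin m → Vec n → Vec n)
    (x p : Vec n) (p0 piv w0 : ℝ) (w : Vec m) : ℝ :=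
  p0 * w0 + ⟪p, w0 • f x + ∑ i, w i • g i x⟫_ℝ + piv * ‖w‖

/-- A modulus. -/
def IsModulus (ρ : ℝ → ℝ) : Prop :=
  (∀ s t : ℝ, 0 ≤ s → s ≤ t → ρ s ≤ ρ t) ∧ (∀ s : ℝ, 0 ≤ s → 0 ≤ ρ s) ∧ ρ 0 = 0 ∧
    Tendsto ρ (nhdsWithin 0 (Ioi 0)) (nhds 0)

/-- Quasi Differential Quotient of a set-valued map `G` at `(ξ, ybar)` in the
direction of `Γ`. -/
def IsQDQ {N : ℕ} {F : Type*} [NormedAddCommGroup F] [NormedSpace ℝ F]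
    (G : Vec N → Set F) (ξ : Vec N) (ybar : F) (Γ : Set (Vec N))
    (Λ : Set (Vec N →L[ℝ] F)) : Prop :=
  IsCompact Λ ∧ ∃ ρ : ℝ → ℝ, IsModulus ρ ∧ ∃ δb > (0:ℝ), ∀ δ ∈ Icc (0:ℝ) δb,
    ∃ L : Vec N → (Vec N →L[ℝ] F), ∃ h : Vec N → F,
      ContinuousOn (fun x => (L x, h x)) (Metric.ball ξ δ ∩ Γ) ∧
      ∀ x ∈ Metric.ball ξ δ ∩ Γ,
        ybar + L x (x - ξ) + h x ∈ G x ∧ ‖h x‖ ≤ δ * ρ δ ∧ ∃ L' ∈ Λ, ‖L x - L'‖ ≤ ρ δ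

/-- QDQ approximating cone to `E` at `z`. -/
def IsQDQApproxCone {F : Type*} [NormedAddCommGroup F] [NormedSpace ℝ F]
    (E : Set F) (z : F) (Kc : Set F) : Prop :=
  z ∈ E ∧ Convex ℝ Kc ∧ IsConeIn Kc ∧
  ∃ N : ℕ, ∃ G : Vec N → Set F, ∃ Γ : Set (Vec N), ∃ ξ : Vec N, ∃ L : Vec N →L[ℝ] F,
    Convex ℝ Γ ∧ IsConeIn Γ ∧ IsQDQ G ξ z Γ {L} ∧
    (∀ γ ∈ Γ, G (ξ + γ) ⊆ E) ∧ Kc = L '' Γ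

/-- The vector fields are smooth and bounded together with all derivatives. -/
def SmoothDyn {n m : ℕ} (f : Vec n → Vec n) (g : Fin m → Vec n → Vec n) : Prop :=
  ContDiff ℝ (⊤ : ℕ∞) f ∧ (∀ i, ContDiff ℝ (⊤ : ℕ∞) (g i)) ∧
  (∀ k : ℕ, ∃ M : ℝ, ∀ x, ‖iteratedFDeriv ℝ k f x‖ ≤ M) ∧
  (∀ i, ∀ k : ℕ, ∃ M : ℝ, ∀ x, ‖iteratedFDeriv ℝ k (g i) x‖ ≤ M)

/-- Mixing of the first `m1` coordinates of `v` with the remaining coordinates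
of `v'`. -/
def mixVec {m : ℕ} (m1 : ℕ) (v v' : Vec m) : Vec m :=
  ∑ i : Fin m,
    if (i : ℕ) < m1 then EuclideanSpace.single i (v i) else EuclideanSpace.single i (v' i)

/-- `(p, p0, π, λ)` is a multiplier tuple making `zb` a higher-order
`Ψ`-extremal with respect to the QDQ approximating cone `Kc`. -/
def HOMultiplier {n m : ℕ} (f : Vec n → Vec n) (g : Fin m → Vec n → Vec n) (m1 : ℕ)
    (C : Set (Vec m)) (K : ℝ≥0∞) (Ψ : ℝ × Vec n → ℝ) (Kc : Set (ℝ × Vec n))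
    (zb : RawProc n m) (p : ℝ → Vec n) (p0 piv lam : ℝ) : Prop :=
  piv ≤ 0 ∧ 0 ≤ lam ∧
  -- (i) non-triviality
  (p0 ≠ 0 ∨ (∃ s ∈ Icc (0:ℝ) zb.S, p s ≠ 0) ∨ lam ≠ 0) ∧
  (0 < zb.y0 zb.S → ((∃ s ∈ Icc (0:ℝ) zb.S, p s ≠ 0) ∨ lam ≠ 0)) ∧
  -- (ii) non-transversality
  (∃ q G : ℝ × Vec n,
    (∀ v ∈ Kc, q.1 * v.1 + ⟪q.2, v.2⟫_ℝ ≤ 0) ∧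
    (∀ v : ℝ × Vec n, fderiv ℝ Ψ (zb.y0 zb.S, zb.y zb.S) v = G.1 * v.1 + ⟪G.2, v.2⟫_ℝ) ∧
    (p0, p zb.S) = -lam • G - q) ∧
  (ENNReal.ofReal (zb.β zb.S) < K → piv = 0) ∧
  -- (iii) adjoint equation (integral form)
  (∀ s ∈ Icc (0:ℝ) zb.S, p s = p 0 - ∫ t in (0:ℝ)..s,
      (zb.w0 t • (ContinuousLinearMap.adjoint (fderiv ℝ f (zb.y t))) (p t)
        + ∑ i, zb.w t i • (ContinuousLinearMap.adjoint (fderiv ℝ (g i) (zb.y t))) (p t))) ∧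
  -- (iv) first order maximization
  (∀ᵐ s ∂μres zb.S, ∀ c ∈ Chat C,
      Hham f g (zb.y s) (p s) p0 piv c.1 c.2
        ≤ Hham f g (zb.y s) (p s) p0 piv (zb.w0 s) (zb.w s)) ∧
  -- (v) vanishing of the (maximized) Hamiltonian
  (∀ s ∈ Icc (0:ℝ) zb.S,
      IsLUB ((fun c : ℝ × Vec m => Hham f g (zb.y s) (p s) p0 piv c.1 c.2) '' Chat C) 0) ∧
  (ENNReal.ofReal (zb.β zb.S) < K →
      ∀ s ∈ Icc (0:ℝ) zb.S, ∀ i : Fin m, (i : ℕ) < m1 → ⟪p s, g i (zb.y s)⟫_ℝ = 0) ∧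
  -- (vi) higher-order conditions
  (ENNReal.ofReal (zb.β zb.S) < K →
      ∀ B : Vec n → Vec n, IterLie g m1 B →
        (∀ s ∈ Icc (0:ℝ) zb.S, ⟪p s, B (zb.y s)⟫_ℝ = 0) ∧
        (∀ᵐ s ∂μres zb.S,
            ⟪p s, zb.w0 s • lieB f B (zb.y s)
              + ∑ j : Fin m,
                  (if m1 ≤ (j : ℕ) then zb.w s j • lieB (g j) B (zb.y s) else 0)⟫_ℝ = 0))


private lemma aux_vanish_integrable {E : Type*} [NormedAddCommGroup E] {q : ℝ → E} {S : ℝ}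
    (hq : IntegrableOn q (Icc 0 S)) (h0 : ∀ t, t ∉ Ico (0:ℝ) S → q t = 0) :
    Integrable q := by
  rw [← integrableOn_univ, ← Set.union_compl_self (Ico (0:ℝ) S)]
  refine (hq.mono_set Ico_subset_Icc_self).union ?_
  exact (integrableOn_congr_fun (fun t ht => h0 t ht) measurableSet_Ico.compl).2
    (integrableOn_zero)

private lemma aux_ext_integral {E : Type*} [NormedAddCommGroup E] [NormedSpace ℝ E]
    {q : ℝ → E} {S : ℝ} (hq : Integrable q) (hvan : ∀ t, S ≤ t → q t = 0)
    {s : ℝ} (hs : S ≤ s) :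
    ∫ t in (0:ℝ)..s, q t = ∫ t in (0:ℝ)..S, q t := by
  have h1 : ∫ t in S..s, q t = 0 := by
    rw [intervalIntegral.integral_congr (g := fun _ => (0:E)) ?_, intervalIntegral.integral_zero]
    intro t ht
    rw [uIcc_of_le hs] at ht
    exact hvan t ht.1
  have h2 := intervalIntegral.integral_add_adjacent_intervals
    (hq.intervalIntegrable (a := 0) (b := S)) (hq.intervalIntegrable (a := S) (b := s))
  rw [← h2, h1, add_zero]

private lemma aux_integral_le {q : ℝ → ℝ} {T : ℝ} (hq : Integrable q) (h0 : ∀ t, 0 ≤ q t)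
    (hvan : ∀ t, T ≤ t → q t = 0) {s : ℝ} (hs : 0 ≤ s) (hT : 0 ≤ T) :
    ∫ t in (0:ℝ)..s, q t ≤ ∫ t in (0:ℝ)..T, q t := by
  rcases le_total s T with h | h
  · exact intervalIntegral.integral_mono_interval le_rfl hs h
      (Eventually.of_forall h0) (hq.intervalIntegrable)
  · rw [aux_ext_integral hq hvan h]

private lemma aux_aesm_primitive {E : Type*} [NormedAddCommGroup E] [NormedSpace ℝ E]
    (F : ℝ → E) {S : ℝ} (hS : 0 ≤ S) :
    AEStronglyMeasurable (fun s => ∫ t in (0:ℝ)..s, F t) (volume.restrict (Icc 0 S)) := by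
  set v : ℝ → E := fun s => ∫ t in (0:ℝ)..s, F t with hv
  set J : Set ℝ := {s | s ∈ Icc 0 S ∧ IntegrableOn F (Ioc 0 s)} with hJdef
  have hJsub : J ⊆ Icc 0 S := fun s hs => hs.1
  have hJord : J.OrdConnected := by
    constructor
    rintro x ⟨hx, _⟩ y ⟨hy, hyi⟩ t ht
    exact ⟨⟨hx.1.trans ht.1, ht.2.trans hy.2⟩, hyi.mono_set (Ioc_subset_Ioc le_rfl ht.2)⟩
  have hJmeas : MeasurableSet J := hJord.measurableSet
  -- On `J`, `v` agrees with the `Ioc`-primitive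
  have hveq : ∀ u : ℝ, 0 ≤ u → v u = ∫ t in Ioc (0:ℝ) u, F t := by
    intro u hu
    rw [hv]
    simp only
    rw [intervalIntegral.integral_of_le hu]
  have hcont : ContinuousOn v J := by
    intro u hu
    by_cases hcase : ∃ u' ∈ J, u < u'
    · obtain ⟨u', hu'J, huu'⟩ := hcase
      have hint : IntegrableOn F (Icc 0 u') := by
        rw [integrableOn_Icc_iff_integrableOn_Ioc]
        exact hu'J.2
      have hw : ContinuousOn (fun x => ∫ t in Ioc (0:ℝ) x, F t) (Icc 0 u') :=
        intervalIntegral.continuousOn_primitive hint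
      have huIcc : u ∈ Icc (0:ℝ) u' := ⟨hu.1.1, huu'.le⟩
      have hcw : ContinuousWithinAt v (Icc 0 u') u := by
        refine (hw u huIcc).congr ?_ ?_
        · intro x hx; exact hveq x hx.1
        · exact hveq u hu.1.1
      refine hcw.mono_of_mem_nhdsWithin ?_
      refine mem_nhdsWithin.2 ⟨Iio u', isOpen_Iio, huu', ?_⟩
      rintro x ⟨hx1, hx2⟩
      exact ⟨(hJsub hx2).1, le_of_lt hx1⟩
    · push_neg at hcase
      have hint : IntegrableOn F (Icc 0 u) := by
        rw [integrableOn_Icc_iff_integrableOn_Ioc]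
        exact hu.2
      have hw : ContinuousOn (fun x => ∫ t in Ioc (0:ℝ) x, F t) (Icc 0 u) :=
        intervalIntegral.continuousOn_primitive hint
      have hcw : ContinuousWithinAt v (Icc 0 u) u := by
        refine (hw u ⟨hu.1.1, le_rfl⟩).congr ?_ ?_
        · intro x hx; exact hveq x hx.1
        · exact hveq u hu.1.1
      exact hcw.mono fun x hx => ⟨(hJsub hx).1, hcase x hx⟩
  have h0 : ∀ s ∈ Icc (0:ℝ) S \ J, v s = 0 := by
    intro s hs
    have hni : ¬ IntegrableOn F (Ioc 0 s) := fun h => hs.2 ⟨hs.1, h⟩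
    rw [hveq s hs.1.1, MeasureTheory.integral_undef hni]
  have hsplit : Icc (0:ℝ) S = J ∪ (Icc 0 S \ J) := (union_diff_cancel hJsub).symm
  rw [hsplit, aestronglyMeasurable_union_iff]
  constructor
  · exact hcont.aestronglyMeasurable hJmeas
  · refine (aestronglyMeasurable_congr ?_).2 (aestronglyMeasurable_const (b := (0:E)))
    filter_upwards [ae_restrict_mem (measurableSet_Icc.diff hJmeas)] with s hs
    exact h0 s hs


private lemma aux_exp_primitive {k : ℝ → ℝ} (hk : Integrable k) (hk0 : ∀ t, 0 ≤ k t) :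
    ∀ u v : ℝ, u ≤ v →
      ∫ t in u..v, k t * Real.exp (∫ x in (0:ℝ)..t, k x)
        ≤ Real.exp (∫ x in (0:ℝ)..v, k x) - Real.exp (∫ x in (0:ℝ)..u, k x) := by
  set A : ℝ → ℝ := fun s => ∫ x in (0:ℝ)..s, k x with hA
  have hAcont : Continuous A := hk.continuous_primitive 0
  have hAdiff : ∀ u v : ℝ, A v - A u = ∫ x in u..v, k x := by
    intro u v
    rw [hA]; simp only
    rw [← intervalIntegral.integral_add_adjacent_intervals
      (hk.intervalIntegrable (a := 0) (b := u)) (hk.intervalIntegrable (a := u) (b := v))]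
    ring
  have hAmono : Monotone A := by
    intro u v huv
    have h1 := hAdiff u v
    have h2 := intervalIntegral.integral_nonneg (f := k) (μ := volume) huv (fun t _ => hk0 t)
    linarith
  -- global bound on |A|
  have hAbd : ∃ CA : ℝ, ∀ t, |A t| ≤ CA := by
    refine ⟨∫ x, |k x|, fun t => ?_⟩
    rcases le_total 0 t with h | h
    · calc |A t| ≤ ∫ x in (0:ℝ)..t, |k x| := intervalIntegral.abs_integral_le_integral_abs h
        _ = ∫ x in Ioc (0:ℝ) t, |k x| := intervalIntegral.integral_of_le h
        _ ≤ ∫ x, |k x| := setIntegral_le_integral hk.abs (Eventually.of_forall fun x => abs_nonneg _)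
    · rw [hA]
      simp only
      rw [intervalIntegral.integral_symm, abs_neg]
      calc |∫ x in t..(0:ℝ), k x| ≤ ∫ x in t..(0:ℝ), |k x| :=
            intervalIntegral.abs_integral_le_integral_abs h
        _ = ∫ x in Ioc t 0, |k x| := intervalIntegral.integral_of_le h
        _ ≤ ∫ x, |k x| := setIntegral_le_integral hk.abs (Eventually.of_forall fun x => abs_nonneg _)
  obtain ⟨CA, hCA⟩ := hAbd
  have hint : Integrable (fun t => k t * Real.exp (A t)) := by
    have := hk.bdd_mul (f := fun t => Real.exp (A t))
      (c := Real.exp CA) (hAcont.rexp.aestronglyMeasurable) (Eventually.of_forall fun t => by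
        rw [Real.norm_eq_abs, abs_of_pos (Real.exp_pos _)]
        exact Real.exp_le_exp.2 ((le_abs_self _).trans (hCA t)))
    exact this.congr (Eventually.of_forall fun t => by ring_nf)
  -- main induction
  have key : ∀ j : ℕ, ∀ u v : ℝ, u ≤ v →
      ∫ t in u..v, k t * Real.exp (A t)
        ≤ Real.exp ((A v - A u) / 2 ^ j) * (Real.exp (A v) - Real.exp (A u)) := by
    intro j
    induction j with
    | zero =>
      intro u v huv
      have h1 : ∫ t in u..v, k t * Real.exp (A t) ≤ ∫ t in u..v, k t * Real.exp (A v) := by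
        refine intervalIntegral.integral_mono_on huv hint.intervalIntegrable
          ((hk.mul_const _).intervalIntegrable) fun t ht => ?_
        exact mul_le_mul_of_nonneg_left (Real.exp_le_exp.2 (hAmono ht.2)) (hk0 t)
      have h2 : ∫ t in u..v, k t * Real.exp (A v) = (A v - A u) * Real.exp (A v) := by
        rw [intervalIntegral.integral_mul_const, hAdiff u v]
      have hd : 0 ≤ A v - A u := sub_nonneg.2 (hAmono huv)
      have h3 : (A v - A u) * Real.exp (A v)
          ≤ Real.exp ((A v - A u) / 2 ^ 0) * (Real.exp (A v) - Real.exp (A u)) := by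
        have he : Real.exp (A v) - Real.exp (A u) = Real.exp (A u) * (Real.exp (A v - A u) - 1) := by
          rw [mul_sub, ← Real.exp_add, mul_one]
          ring_nf
        have hge : A v - A u + 1 ≤ Real.exp (A v - A u) := Real.add_one_le_exp _
        have hAv : Real.exp (A v) = Real.exp (A u) * Real.exp (A v - A u) := by
          rw [← Real.exp_add]; ring_nf
        rw [pow_zero, div_one, he, hAv]
        have hle : (A v - A u) ≤ Real.exp (A v - A u) - 1 := by linarith
        calc (A v - A u) * (Real.exp (A u) * Real.exp (A v - A u))
            ≤ (Real.exp (A v - A u) - 1) * (Real.exp (A u) * Real.exp (A v - A u)) :=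
              mul_le_mul_of_nonneg_right hle (by positivity)
          _ = Real.exp (A v - A u) * (Real.exp (A u) * (Real.exp (A v - A u) - 1)) := by ring
      calc _ ≤ _ := h1
        _ = _ := h2
        _ ≤ _ := h3
    | succ j ih =>
      intro u v huv
      obtain ⟨w, hwmem, hw⟩ : ∃ w ∈ Icc u v, A w = (A u + A v) / 2 := by
        have := intermediate_value_Icc huv (hAcont.continuousOn (s := Icc u v))
        have hmem : (A u + A v) / 2 ∈ Icc (A u) (A v) := by
          constructor <;> nlinarith [hAmono huv]
        obtain ⟨w, hw1, hw2⟩ := this hmem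
        exact ⟨w, hw1, hw2⟩
      have hsplit : ∫ t in u..v, k t * Real.exp (A t)
          = (∫ t in u..w, k t * Real.exp (A t)) + ∫ t in w..v, k t * Real.exp (A t) := by
        rw [intervalIntegral.integral_add_adjacent_intervals
          hint.intervalIntegrable hint.intervalIntegrable]
      have h1 := ih u w hwmem.1
      have h2 := ih w v hwmem.2
      have e1 : (A w - A u) / 2 ^ j = (A v - A u) / 2 ^ (j + 1) := by
        rw [hw]; ring
      have e2 : (A v - A w) / 2 ^ j = (A v - A u) / 2 ^ (j + 1) := by
        rw [hw]; ring
      rw [e1] at h1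
      rw [e2] at h2
      rw [hsplit]
      calc _ ≤ Real.exp ((A v - A u) / 2 ^ (j+1)) * (Real.exp (A w) - Real.exp (A u))
            + Real.exp ((A v - A u) / 2 ^ (j+1)) * (Real.exp (A v) - Real.exp (A w)) :=
          add_le_add h1 h2
        _ = Real.exp ((A v - A u) / 2 ^ (j+1)) * (Real.exp (A v) - Real.exp (A u)) := by ring
  intro u v huv
  have h2 : Tendsto (fun j : ℕ => (A v - A u) / 2 ^ j) atTop (nhds 0) := by
    have h3 := tendsto_pow_atTop_nhds_zero_of_lt_one
      (r := (1:ℝ)/2) (by norm_num) (by norm_num)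
    have h4 := h3.const_mul (A v - A u)
    rw [mul_zero] at h4
    refine h4.congr fun j => ?_
    rw [div_pow, one_pow, mul_one_div]
  have hexp : Tendsto (fun j : ℕ => Real.exp ((A v - A u) / 2 ^ j)) atTop (nhds 1) := by
    have := (Real.continuous_exp.tendsto 0).comp h2
    simpa [Function.comp_def] using this
  have hlim := hexp.mul_const (Real.exp (A v) - Real.exp (A u))
  rw [one_mul] at hlim
  exact ge_of_tendsto hlim (Eventually.of_forall fun j => key j u v huv)

private lemma aux_gronwall {k φ : ℝ → ℝ} (hk : Integrable k) (hk0 : ∀ t, 0 ≤ k t)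
    (hφ : Continuous φ) (hφ0 : ∀ t, 0 ≤ φ t) {a : ℝ} (ha : 0 ≤ a)
    {T : ℝ} (hT : 0 ≤ T)
    (hineq : ∀ s ∈ Icc (0:ℝ) T, φ s ≤ a + ∫ t in (0:ℝ)..s, k t * φ t) :
    ∀ s ∈ Icc (0:ℝ) T, φ s ≤ a * Real.exp (∫ t in (0:ℝ)..T, k t) := by
  set A : ℝ → ℝ := fun s => ∫ x in (0:ℝ)..s, k x with hA
  have hAcont : Continuous A := hk.continuous_primitive 0
  have hAdiff : ∀ u v : ℝ, A v - A u = ∫ x in u..v, k x := by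
    intro u v
    rw [hA]; simp only
    rw [← intervalIntegral.integral_add_adjacent_intervals
      (hk.intervalIntegrable (a := 0) (b := u)) (hk.intervalIntegrable (a := u) (b := v))]
    ring
  have hAmono : Monotone A := by
    intro u v huv
    have h1 := hAdiff u v
    have h2 := intervalIntegral.integral_nonneg (f := k) (μ := volume) huv (fun t _ => hk0 t)
    linarith
  have hA0 : A 0 = 0 := intervalIntegral.integral_same
  obtain ⟨Cφ, hCφ⟩ := (isCompact_Icc (a := (0:ℝ)) (b := T)).exists_bound_of_continuousOn
    hφ.continuousOn
  have claim : ∀ ε > (0:ℝ), ∀ s ∈ Icc (0:ℝ) T, φ s ≤ (a + ε) * Real.exp (A s) := by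
    intro ε hε
    by_contra hcon
    push_neg at hcon
    obtain ⟨s0, hs0, hs0'⟩ := hcon
    set Cset : Set ℝ := {s | s ∈ Icc (0:ℝ) T ∧ (a + ε) * Real.exp (A s) ≤ φ s} with hCset
    have hclosed : IsClosed Cset := by
      have : Cset = Icc (0:ℝ) T ∩ {s | (a + ε) * Real.exp (A s) ≤ φ s} := rfl
      rw [this]
      exact isClosed_Icc.inter (isClosed_le (by fun_prop) hφ)
    have hne : Cset.Nonempty := ⟨s0, hs0, hs0'.le⟩
    have hbdd : BddBelow Cset := ⟨0, fun x hx => hx.1.1⟩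
    set s' : ℝ := sInf Cset with hs'
    have hmem : s' ∈ Cset := hclosed.csInf_mem hne hbdd
    have hsIcc : s' ∈ Icc (0:ℝ) T := hmem.1
    have hlt : ∀ t, 0 ≤ t → t < s' → φ t ≤ (a + ε) * Real.exp (A t) := by
      intro t ht0 hts
      have : t ∉ Cset := fun h => absurd (csInf_le hbdd h) (not_le.2 hts)
      have htIcc : t ∈ Icc (0:ℝ) T := ⟨ht0, hts.le.trans hsIcc.2⟩
      by_contra hcon2
      push_neg at hcon2
      exact this ⟨htIcc, hcon2.le⟩
    -- integrability facts on [0, s']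
    have hkφae : AEStronglyMeasurable (fun t => k t * φ t) volume :=
      hk.aestronglyMeasurable.mul hφ.aestronglyMeasurable
    have hIoc_sub : Ioc (0:ℝ) s' ⊆ Icc (0:ℝ) T := fun t ht => ⟨ht.1.le, ht.2.trans hsIcc.2⟩
    have hkφ_int : IntervalIntegrable (fun t => k t * φ t) volume 0 s' := by
      constructor
      · refine Integrable.mono' ((hk.const_mul Cφ).integrableOn) hkφae.restrict ?_
        filter_upwards [ae_restrict_mem measurableSet_Ioc] with t ht
        have h1 : φ t ≤ Cφ := le_trans (le_abs_self _) (hCφ t (hIoc_sub ht))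
        rw [Real.norm_eq_abs, abs_of_nonneg (mul_nonneg (hk0 t) (hφ0 t))]
        calc k t * φ t ≤ k t * Cφ := mul_le_mul_of_nonneg_left h1 (hk0 t)
          _ = Cφ * k t := by ring
      · rw [Ioc_eq_empty (not_lt.2 hsIcc.1)]
        exact integrableOn_empty
    have hψ_int : IntervalIntegrable (fun t => k t * Real.exp (A t)) volume 0 s' := by
      constructor
      · refine Integrable.mono' ((hk.const_mul (Real.exp (A s'))).integrableOn)
          (hk.aestronglyMeasurable.mul (hAcont.rexp.aestronglyMeasurable)).restrict ?_
        filter_upwards [ae_restrict_mem measurableSet_Ioc] with t ht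
        rw [Real.norm_eq_abs, abs_of_nonneg (mul_nonneg (hk0 t) (Real.exp_pos _).le)]
        calc k t * Real.exp (A t) ≤ k t * Real.exp (A s') :=
              mul_le_mul_of_nonneg_left (Real.exp_le_exp.2 (hAmono ht.2)) (hk0 t)
          _ = Real.exp (A s') * k t := by ring
      · rw [Ioc_eq_empty (not_lt.2 hsIcc.1)]
        exact integrableOn_empty
    have hne_s : ∀ᵐ t ∂(volume.restrict (Icc (0:ℝ) s')), t ≠ s' := by
      refine MeasureTheory.ae_iff.2 ?_
      have : {t : ℝ | ¬ t ≠ s'} = {s'} := by ext t; simp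
      rw [this, Measure.restrict_apply (measurableSet_singleton _)]
      exact measure_mono_null inter_subset_left Real.volume_singleton
    have h2 : ∫ t in (0:ℝ)..s', k t * φ t
        ≤ ∫ t in (0:ℝ)..s', (a + ε) * (k t * Real.exp (A t)) := by
      refine intervalIntegral.integral_mono_ae_restrict hsIcc.1 hkφ_int
        (hψ_int.const_mul _) ?_
      filter_upwards [ae_restrict_mem measurableSet_Icc, hne_s] with t ht htne
      have htlt : t < s' := lt_of_le_of_ne ht.2 htne
      have h3 := hlt t ht.1 htlt
      calc k t * φ t ≤ k t * ((a + ε) * Real.exp (A t)) :=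
            mul_le_mul_of_nonneg_left h3 (hk0 t)
        _ = (a + ε) * (k t * Real.exp (A t)) := by ring
    have h4 : ∫ t in (0:ℝ)..s', (a + ε) * (k t * Real.exp (A t))
        = (a + ε) * ∫ t in (0:ℝ)..s', k t * Real.exp (A t) :=
      intervalIntegral.integral_const_mul _ _
    have h5 := aux_exp_primitive hk hk0 0 s' hsIcc.1
    simp only [intervalIntegral.integral_same, Real.exp_zero] at h5
    have h6 : ∫ t in (0:ℝ)..s', k t * Real.exp (A t) ≤ Real.exp (A s') - 1 := h5
    have h7 := hineq s' hsIcc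
    have h8 : (a + ε) * Real.exp (A s') ≤ φ s' := hmem.2
    have h9 : (0:ℝ) < Real.exp (A s') := Real.exp_pos _
    have h10 : 0 ≤ ∫ t in (0:ℝ)..s', k t * Real.exp (A t) :=
      intervalIntegral.integral_nonneg hsIcc.1
        (fun t _ => mul_nonneg (hk0 t) (Real.exp_pos _).le)
    nlinarith
  intro s hs
  refine le_of_forall_pos_le_add fun δ hδ => ?_
  have hEpos : (0:ℝ) < Real.exp (A T) := Real.exp_pos _
  have hε : (0:ℝ) < δ / Real.exp (A T) := div_pos hδ hEpos
  have h1 := claim _ hε s hs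
  have h2 : Real.exp (A s) ≤ Real.exp (A T) := Real.exp_le_exp.2 (hAmono hs.2)
  have h3 : (a + δ / Real.exp (A T)) * Real.exp (A s)
      ≤ (a + δ / Real.exp (A T)) * Real.exp (A T) :=
    mul_le_mul_of_nonneg_left h2 (by positivity)
  have h4 : (a + δ / Real.exp (A T)) * Real.exp (A T) = a * Real.exp (A T) + δ := by
    field_simp
  calc φ s ≤ _ := h1
    _ ≤ _ := h3
    _ = _ := h4


private lemma aux_arith {M0 mR d0 dw b0 bw P : ℝ} (hM0 : 0 ≤ M0) (hm : 0 ≤ mR)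
    (h4 : 0 ≤ d0) (h5 : 0 ≤ dw) (h6 : 0 ≤ b0) (h7 : 0 ≤ bw) (hP : 0 ≤ P) :
    d0 * M0 + b0 * (M0 * P) + mR * (dw * M0 + bw * (M0 * P))
      ≤ M0 * (mR + 1) * (d0 + dw) + M0 * (mR + 1) * (b0 + bw) * P := by
  nlinarith [mul_nonneg (mul_nonneg hM0 hm) h4, mul_nonneg hM0 h5,
    mul_nonneg (mul_nonneg (mul_nonneg hM0 hm) h6) hP, mul_nonneg (mul_nonneg hM0 h7) hP]

private lemma aux_coord_le {m : ℕ} (v : Vec m) (i : Fin m) : |v i| ≤ ‖v‖ := by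
  rw [EuclideanSpace.norm_eq, ← Real.sqrt_sq_eq_abs]
  apply Real.sqrt_le_sqrt
  have := Finset.single_le_sum (f := fun j => ‖v j‖ ^ 2)
    (fun j _ => sq_nonneg _) (Finset.mem_univ i)
  simpa [Real.norm_eq_abs, sq_abs] using this

private lemma aux_process {n m : ℕ} {f : Vec n → Vec n} {g : Fin m → Vec n → Vec n}
    {C : Set (Vec m)} {x0 : Vec n} {z : RawProc n m}
    (hfc : Continuous f) (hgc : ∀ i, Continuous (g i))
    {M0 : ℝ} (hbf : ∀ x, ‖f x‖ ≤ M0) (hbg : ∀ i x, ‖g i x‖ ≤ M0)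
    (hz : IsExtProcess f g C x0 z) :
    Integrable z.w0 ∧ Integrable z.w ∧
    Integrable (fun t => z.w0 t • f (z.y t) + ∑ i, z.w t i • g i (z.y t)) ∧
    (∀ s, 0 ≤ s → z.y0 s = ∫ t in (0:ℝ)..s, z.w0 t) ∧
    (∀ s, 0 ≤ s → z.β s = ∫ t in (0:ℝ)..s, ‖z.w t‖) ∧
    (∀ s, 0 ≤ s → z.y s = x0 + ∫ t in (0:ℝ)..s,
        (z.w0 t • f (z.y t) + ∑ i, z.w t i • g i (z.y t))) ∧
    (∀ t, ‖z.w0 t • f (z.y t) + ∑ i, z.w t i • g i (z.y t)‖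
        ≤ M0 * ((m:ℝ) + 1) * (|z.w0 t| + ‖z.w t‖)) := by
  obtain ⟨hS, hw0m, hwm, ⟨Mz, hMz⟩, hae, -, hvan, hy0, hy, hβ, hfreeze⟩ := hz
  simp only [μres] at hMz hae
  have hS0 : (0:ℝ) ≤ z.S := hS.le
  have hM0nn : (0:ℝ) ≤ M0 := (norm_nonneg (f 0)).trans (hbf 0)
  have hw0int : IntegrableOn z.w0 (Icc 0 z.S) := by
    refine Integrable.mono' (g := fun _ => Mz) (integrableOn_const measure_Icc_lt_top.ne)
      hw0m.aestronglyMeasurable ?_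
    filter_upwards [hMz] with t ht
    rw [Real.norm_eq_abs]
    have := norm_nonneg (z.w t); linarith
  have hw0glob : Integrable z.w0 := aux_vanish_integrable hw0int fun t ht => (hvan t ht).1
  have hwint : IntegrableOn z.w (Icc 0 z.S) := by
    refine Integrable.mono' (g := fun _ => Mz) (integrableOn_const measure_Icc_lt_top.ne)
      hwm.aestronglyMeasurable ?_
    filter_upwards [hMz] with t ht
    have := abs_nonneg (z.w0 t); linarith
  have hwglob : Integrable z.w := aux_vanish_integrable hwint fun t ht => (hvan t ht).2
  have hy0' : ∀ s, 0 ≤ s → z.y0 s = ∫ t in (0:ℝ)..s, z.w0 t := by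
    intro s hs
    rcases le_total s z.S with h | h
    · exact hy0 s ⟨hs, h⟩
    · rw [(hfreeze s h).1, hy0 z.S ⟨hS0, le_rfl⟩,
        aux_ext_integral hw0glob
          (fun t ht => (hvan t (fun hmem => (not_lt.2 ht) hmem.2)).1) h]
  have hβ' : ∀ s, 0 ≤ s → z.β s = ∫ t in (0:ℝ)..s, ‖z.w t‖ := by
    intro s hs
    rcases le_total s z.S with h | h
    · exact hβ s ⟨hs, h⟩
    · rw [(hfreeze s h).2.2, hβ z.S ⟨hS0, le_rfl⟩,
        aux_ext_integral hwglob.norm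
          (fun t ht => by rw [(hvan t (fun hmem => (not_lt.2 ht) hmem.2)).2, norm_zero]) h]
  set hF : ℝ → Vec n := fun t => z.w0 t • f (z.y t) + ∑ i, z.w t i • g i (z.y t) with hFdef
  have hvm : AEStronglyMeasurable (fun s => ∫ t in (0:ℝ)..s, hF t)
      (volume.restrict (Icc 0 z.S)) := aux_aesm_primitive hF hS0
  have hyaesm : AEStronglyMeasurable z.y (volume.restrict (Icc 0 z.S)) := by
    refine AEStronglyMeasurable.congr (hvm.const_add x0) ?_
    filter_upwards [ae_restrict_mem measurableSet_Icc] with s hs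
    exact (hy s hs).symm
  have hFaesm : AEStronglyMeasurable hF (volume.restrict (Icc 0 z.S)) := by
    refine AEStronglyMeasurable.add ?_ ?_
    · exact (hw0m.aestronglyMeasurable).smul (hfc.comp_aestronglyMeasurable hyaesm)
    · refine Finset.aestronglyMeasurable_fun_sum _ fun i _ => ?_
      have hwi : Measurable fun t => z.w t i :=
        ((EuclideanSpace.proj (𝕜 := ℝ) i).continuous.measurable).comp hwm
      exact hwi.aestronglyMeasurable.smul ((hgc i).comp_aestronglyMeasurable hyaesm)
  have hFbound : ∀ t, ‖hF t‖ ≤ M0 * ((m:ℝ) + 1) * (|z.w0 t| + ‖z.w t‖) := by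
    intro t
    have h1 : ‖z.w0 t • f (z.y t)‖ ≤ |z.w0 t| * M0 := by
      rw [norm_smul, Real.norm_eq_abs]
      exact mul_le_mul_of_nonneg_left (hbf _) (abs_nonneg _)
    have h2 : ‖∑ i, z.w t i • g i (z.y t)‖ ≤ (m:ℝ) * (‖z.w t‖ * M0) := by
      refine (norm_sum_le _ _).trans ?_
      have hterm : ∀ i ∈ Finset.univ, ‖z.w t i • g i (z.y t)‖ ≤ ‖z.w t‖ * M0 := by
        intro i _
        rw [norm_smul, Real.norm_eq_abs]
        exact mul_le_mul (aux_coord_le _ i) (hbg i _) (norm_nonneg _) (norm_nonneg _)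
      calc _ ≤ ∑ _i : Fin m, ‖z.w t‖ * M0 := Finset.sum_le_sum hterm
        _ = (m:ℝ) * (‖z.w t‖ * M0) := by
            rw [Finset.sum_const, Finset.card_univ, Fintype.card_fin, nsmul_eq_mul]
    have h3 : ‖hF t‖ ≤ ‖z.w0 t • f (z.y t)‖ + ‖∑ i, z.w t i • g i (z.y t)‖ := norm_add_le _ _
    have h4 : (0:ℝ) ≤ |z.w0 t| := abs_nonneg _
    have h5 : (0:ℝ) ≤ ‖z.w t‖ := norm_nonneg _
    have h6 : (0:ℝ) ≤ (m:ℝ) := Nat.cast_nonneg m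
    nlinarith [mul_nonneg (mul_nonneg hM0nn h6) h4, mul_nonneg hM0nn h5]
  have hFvan : ∀ t, t ∉ Ico (0:ℝ) z.S → hF t = 0 := by
    intro t ht
    have h1 := (hvan t ht).1
    have h2 := (hvan t ht).2
    simp only [hFdef, h1, h2, zero_smul, zero_add]
    refine Finset.sum_eq_zero fun i _ => ?_
    have : (0 : Vec m) i = 0 := rfl
    rw [this, zero_smul]
  have hFint : IntegrableOn hF (Icc 0 z.S) := by
    refine Integrable.mono' (g := fun _ => M0 * ((m:ℝ) + 1) * Mz)
      (integrableOn_const measure_Icc_lt_top.ne) hFaesm ?_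
    filter_upwards [hMz] with t ht
    refine (hFbound t).trans ?_
    have : (0:ℝ) ≤ M0 * ((m:ℝ) + 1) := by positivity
    exact mul_le_mul_of_nonneg_left ht this
  have hFglob : Integrable hF := aux_vanish_integrable hFint hFvan
  have hy' : ∀ s, 0 ≤ s → z.y s = x0 + ∫ t in (0:ℝ)..s, hF t := by
    intro s hs
    rcases le_total s z.S with h | h
    · exact hy s ⟨hs, h⟩
    · rw [(hfreeze s h).2.1, hy z.S ⟨hS0, le_rfl⟩,
        aux_ext_integral hFglob
          (fun t ht => hFvan t (fun hmem => (not_lt.2 ht) hmem.2)) h]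
  exact ⟨hw0glob, hwglob, hFglob, hy0', hβ', hy', hFbound⟩

end
/-- There exist constants `M, L > 0`, depending only on the bounds and
Lipschitz constants of the vector fields, such that for all extended processes `z̄`, `z`
the three `L^∞`-estimates of Lemma L0 hold. -/
theorem stmt_0 {n m : ℕ} (f : Vec n → Vec n) (g : Fin m → Vec n → Vec n)
    (C : Set (Vec m)) (x0 : Vec n)
    (hdyn : GoodDyn f g) (hCclosed : IsClosed C) (hCcone : IsConeIn C) :
    ∃ M > (0:ℝ), ∃ L > (0:ℝ),
      ∀ zb z : RawProc n m,
        IsExtProcess f g C x0 zb → IsExtProcess f g C x0 z →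
        ((∀ s ∈ Ici (0:ℝ),
            |z.y0 s - zb.y0 s| ≤ ∫ t in (0:ℝ)..(max z.S zb.S), |z.w0 t - zb.w0 t|) ∧
         (∫ t in (0:ℝ)..(max z.S zb.S), |z.w0 t - zb.w0 t|) ≤ dtil z zb ∧
         (∀ s ∈ Ici (0:ℝ),
            |z.β s - zb.β s| ≤ ∫ t in (0:ℝ)..(max z.S zb.S), ‖z.w t - zb.w t‖) ∧
         (∫ t in (0:ℝ)..(max z.S zb.S), ‖z.w t - zb.w t‖) ≤ dtil z zb ∧
         (∀ s ∈ Ici (0:ℝ),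
            ‖z.y s - zb.y s‖ ≤
              M * Real.exp (L * (zb.y0 zb.S + zb.β zb.S)) * dtil z zb)) := by
  classical
  obtain ⟨hf1, hg1, Mf, hbf0, hbg0, hdf, hdg⟩ := hdyn
  set M0 : ℝ := max Mf 1 with hM0def
  have hM0_1 : (1:ℝ) ≤ M0 := le_max_right _ _
  have hM0pos : (0:ℝ) < M0 := lt_of_lt_of_le one_pos hM0_1
  have hM0nn : (0:ℝ) ≤ M0 := hM0pos.le
  have hbf : ∀ x, ‖f x‖ ≤ M0 := fun x => (hbf0 x).trans (le_max_left _ _)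
  have hbg : ∀ i x, ‖g i x‖ ≤ M0 := fun i x => (hbg0 i x).trans (le_max_left _ _)
  have hfl : ∀ x y, ‖f x - f y‖ ≤ M0 * ‖x - y‖ := by
    intro x y
    exact Convex.norm_image_sub_le_of_norm_fderiv_le
      (fun u _ => (hf1.differentiable one_ne_zero).differentiableAt)
      (fun u _ => (hdf u).trans (le_max_left _ _)) convex_univ (mem_univ y) (mem_univ x)
  have hgl : ∀ i x y, ‖g i x - g i y‖ ≤ M0 * ‖x - y‖ := by
    intro i x y
    exact Convex.norm_image_sub_le_of_norm_fderiv_le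
      (fun u _ => ((hg1 i).differentiable one_ne_zero).differentiableAt)
      (fun u _ => (hdg i u).trans (le_max_left _ _)) convex_univ (mem_univ y) (mem_univ x)
  set mC : ℝ := M0 * ((m:ℝ) + 1) with hmCdef
  have hmR : (0:ℝ) ≤ (m:ℝ) := Nat.cast_nonneg m
  have hmCpos : (0:ℝ) < mC := by positivity
  refine ⟨mC, hmCpos, mC, hmCpos, ?_⟩
  intro zb z hzb hz
  obtain ⟨hw0zI, hwzI, hFzI, hy0z, hβz, hyz, hFzbd⟩ :=
    aux_process hf1.continuous (fun i => (hg1 i).continuous) hbf hbg hz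
  obtain ⟨hw0bI, hwbI, hFbI, hy0b, hβb, hyb, hFbbd⟩ :=
    aux_process hf1.continuous (fun i => (hg1 i).continuous) hbf hbg hzb
  obtain ⟨hSz, -, -, -, -, -, hvanz, -, -, -, -⟩ := hz
  obtain ⟨hSb, -, -, -, haeb, -, hvanb, -, -, -, -⟩ := hzb
  have hSz0 : (0:ℝ) ≤ z.S := hSz.le
  have hSb0 : (0:ℝ) ≤ zb.S := hSb.le
  set Tm : ℝ := max z.S zb.S with hTmdef
  have hTm0 : (0:ℝ) ≤ Tm := hSz0.trans (le_max_left _ _)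
  set hFz : ℝ → Vec n := fun t => z.w0 t • f (z.y t) + ∑ i, z.w t i • g i (z.y t) with hFzdef
  set hFb : ℝ → Vec n := fun t => zb.w0 t • f (zb.y t) + ∑ i, zb.w t i • g i (zb.y t)
    with hFbdef
  -- vanishing facts beyond `Tm`
  have hvz : ∀ t, Tm ≤ t → z.w0 t = 0 ∧ z.w t = 0 := fun t ht =>
    hvanz t (fun hmem => (not_lt.2 ((le_max_left _ _).trans ht)) hmem.2)
  have hvb : ∀ t, Tm ≤ t → zb.w0 t = 0 ∧ zb.w t = 0 := fun t ht =>
    hvanb t (fun hmem => (not_lt.2 ((le_max_right _ _).trans ht)) hmem.2)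
  -- integrability of difference data
  have hDw0I : Integrable (fun t => |z.w0 t - zb.w0 t|) := (hw0zI.sub hw0bI).abs
  have hDwI : Integrable (fun t => ‖z.w t - zb.w t‖) := (hwzI.sub hwbI).norm
  have hΔI : Integrable (fun t => |z.w0 t - zb.w0 t| + ‖z.w t - zb.w t‖) := hDw0I.add hDwI
  have hΔ0 : ∀ t, (0:ℝ) ≤ |z.w0 t - zb.w0 t| + ‖z.w t - zb.w t‖ :=
    fun t => add_nonneg (abs_nonneg _) (norm_nonneg _)
  have hΔvan : ∀ t, Tm ≤ t → |z.w0 t - zb.w0 t| + ‖z.w t - zb.w t‖ = 0 := by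
    intro t ht
    rw [(hvz t ht).1, (hvz t ht).2, (hvb t ht).1, (hvb t ht).2]
    simp
  set D : ℝ := ∫ t in (0:ℝ)..Tm, (|z.w0 t - zb.w0 t| + ‖z.w t - zb.w t‖) with hDdef
  have hD0 : (0:ℝ) ≤ D := intervalIntegral.integral_nonneg hTm0 fun t _ => hΔ0 t
  have hDsplit : D = (∫ t in (0:ℝ)..Tm, |z.w0 t - zb.w0 t|)
      + ∫ t in (0:ℝ)..Tm, ‖z.w t - zb.w t‖ := by
    rw [hDdef]
    exact intervalIntegral.integral_add hDw0I.intervalIntegrable hDwI.intervalIntegrable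
  have hIw0nn : (0:ℝ) ≤ ∫ t in (0:ℝ)..Tm, |z.w0 t - zb.w0 t| :=
    intervalIntegral.integral_nonneg hTm0 fun t _ => abs_nonneg _
  have hIwnn : (0:ℝ) ≤ ∫ t in (0:ℝ)..Tm, ‖z.w t - zb.w t‖ :=
    intervalIntegral.integral_nonneg hTm0 fun t _ => norm_nonneg _
  have hdtil : dtil z zb = |z.S - zb.S| + D := rfl
  have hDdtil : D ≤ dtil z zb := by
    rw [hdtil]
    have := abs_nonneg (z.S - zb.S)
    linarith
  -- Parts (i) and (ii)
  have part1 : ∀ s ∈ Ici (0:ℝ),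
      |z.y0 s - zb.y0 s| ≤ ∫ t in (0:ℝ)..Tm, |z.w0 t - zb.w0 t| := by
    intro s hs
    rw [hy0z s hs, hy0b s hs,
      ← intervalIntegral.integral_sub hw0zI.intervalIntegrable hw0bI.intervalIntegrable]
    refine (intervalIntegral.abs_integral_le_integral_abs hs).trans ?_
    refine aux_integral_le hDw0I (fun t => abs_nonneg _) ?_ hs hTm0
    intro t ht
    rw [(hvz t ht).1, (hvb t ht).1, sub_zero, abs_zero]
  have part2 : (∫ t in (0:ℝ)..Tm, |z.w0 t - zb.w0 t|) ≤ dtil z zb := by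
    rw [hdtil]
    have := abs_nonneg (z.S - zb.S)
    linarith [hDsplit, hIwnn]
  have part3 : ∀ s ∈ Ici (0:ℝ),
      |z.β s - zb.β s| ≤ ∫ t in (0:ℝ)..Tm, ‖z.w t - zb.w t‖ := by
    intro s hs
    rw [hβz s hs, hβb s hs,
      ← intervalIntegral.integral_sub hwzI.norm.intervalIntegrable
        hwbI.norm.intervalIntegrable]
    refine (intervalIntegral.abs_integral_le_integral_abs hs).trans ?_
    have hmono : (∫ t in (0:ℝ)..s, |‖z.w t‖ - ‖zb.w t‖|)
        ≤ ∫ t in (0:ℝ)..s, ‖z.w t - zb.w t‖ := by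
      refine intervalIntegral.integral_mono_on hs
        (hwzI.norm.sub hwbI.norm).abs.intervalIntegrable hDwI.intervalIntegrable ?_
      intro t _
      exact abs_norm_sub_norm_le _ _
    refine hmono.trans ?_
    refine aux_integral_le hDwI (fun t => norm_nonneg _) ?_ hs hTm0
    intro t ht
    rw [(hvz t ht).2, (hvb t ht).2, sub_zero, norm_zero]
  have part4 : (∫ t in (0:ℝ)..Tm, ‖z.w t - zb.w t‖) ≤ dtil z zb := by
    rw [hdtil]
    have := abs_nonneg (z.S - zb.S)
    linarith [hDsplit, hIw0nn]
  -- Part (iii): Gronwall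
  set k : ℝ → ℝ := fun t => mC * (|zb.w0 t| + ‖zb.w t‖) with hkdef
  have hkI : Integrable k := (hw0bI.abs.add hwbI.norm).const_mul mC
  have hk0 : ∀ t, 0 ≤ k t :=
    fun t => mul_nonneg hmCpos.le (add_nonneg (abs_nonneg _) (norm_nonneg _))
  set φ : ℝ → ℝ := fun s => ‖∫ t in (0:ℝ)..s, (hFz t - hFb t)‖ with hφdef
  have hφcont : Continuous φ := ((hFzI.sub hFbI).continuous_primitive 0).norm
  have hφ0 : ∀ t, 0 ≤ φ t := fun t => norm_nonneg _
  have hφeq : ∀ t, 0 ≤ t → z.y t - zb.y t = ∫ τ in (0:ℝ)..t, (hFz τ - hFb τ) := by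
    intro t ht
    rw [hyz t ht, hyb t ht,
      intervalIntegral.integral_sub hFzI.intervalIntegrable hFbI.intervalIntegrable]
    abel
  set a : ℝ := mC * D with hadef
  have ha0 : 0 ≤ a := mul_nonneg hmCpos.le hD0
  have key : ∀ t, 0 ≤ t → ‖hFz t - hFb t‖
      ≤ mC * (|z.w0 t - zb.w0 t| + ‖z.w t - zb.w t‖) + k t * φ t := by
    intro t ht
    have hφt : ‖z.y t - zb.y t‖ = φ t := by rw [hφeq t ht]
    have hsplit : hFz t - hFb t =
        ((z.w0 t - zb.w0 t) • f (z.y t) + zb.w0 t • (f (z.y t) - f (zb.y t)))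
        + ∑ i, ((z.w t i - zb.w t i) • g i (z.y t)
            + zb.w t i • (g i (z.y t) - g i (zb.y t))) := by
      rw [hFzdef, hFbdef]
      simp only
      have hsum : ∑ i : Fin m, ((z.w t i - zb.w t i) • g i (z.y t)
            + zb.w t i • (g i (z.y t) - g i (zb.y t)))
          = (∑ i : Fin m, z.w t i • g i (z.y t)) - ∑ i : Fin m, zb.w t i • g i (zb.y t) := by
        rw [← Finset.sum_sub_distrib]
        refine Finset.sum_congr rfl fun i _ => ?_
        rw [sub_smul, smul_sub]
        abel
      rw [hsum, sub_smul, smul_sub]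
      abel
    have hb1 : ‖(z.w0 t - zb.w0 t) • f (z.y t)‖ ≤ |z.w0 t - zb.w0 t| * M0 := by
      rw [norm_smul, Real.norm_eq_abs]
      exact mul_le_mul_of_nonneg_left (hbf _) (abs_nonneg _)
    have hb2 : ‖zb.w0 t • (f (z.y t) - f (zb.y t))‖ ≤ |zb.w0 t| * (M0 * φ t) := by
      rw [norm_smul, Real.norm_eq_abs]
      refine mul_le_mul_of_nonneg_left ?_ (abs_nonneg _)
      rw [← hφt]
      exact hfl _ _
    have hb3 : ‖∑ i, ((z.w t i - zb.w t i) • g i (z.y t)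
        + zb.w t i • (g i (z.y t) - g i (zb.y t)))‖
        ≤ (m:ℝ) * (‖z.w t - zb.w t‖ * M0 + ‖zb.w t‖ * (M0 * φ t)) := by
      refine (norm_sum_le _ _).trans ?_
      have hterm : ∀ i ∈ Finset.univ, ‖(z.w t i - zb.w t i) • g i (z.y t)
          + zb.w t i • (g i (z.y t) - g i (zb.y t))‖
          ≤ ‖z.w t - zb.w t‖ * M0 + ‖zb.w t‖ * (M0 * φ t) := by
        intro i _
        refine (norm_add_le _ _).trans (add_le_add ?_ ?_)
        · rw [norm_smul, Real.norm_eq_abs]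
          have h1 : |z.w t i - zb.w t i| ≤ ‖z.w t - zb.w t‖ := by
            have := aux_coord_le (z.w t - zb.w t) i
            have he : (z.w t - zb.w t) i = z.w t i - zb.w t i := rfl
            rwa [he] at this
          exact mul_le_mul h1 (hbg i _) (norm_nonneg _) (norm_nonneg _)
        · rw [norm_smul, Real.norm_eq_abs]
          have h1 : |zb.w t i| ≤ ‖zb.w t‖ := aux_coord_le _ i
          have h2 : ‖g i (z.y t) - g i (zb.y t)‖ ≤ M0 * φ t := by
            rw [← hφt]; exact hgl i _ _
          exact mul_le_mul h1 h2 (norm_nonneg _) (norm_nonneg _)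
      calc _ ≤ ∑ _i : Fin m, (‖z.w t - zb.w t‖ * M0 + ‖zb.w t‖ * (M0 * φ t)) :=
            Finset.sum_le_sum hterm
        _ = (m:ℝ) * (‖z.w t - zb.w t‖ * M0 + ‖zb.w t‖ * (M0 * φ t)) := by
            rw [Finset.sum_const, Finset.card_univ, Fintype.card_fin, nsmul_eq_mul]
    have htot : ‖hFz t - hFb t‖ ≤ (|z.w0 t - zb.w0 t| * M0 + |zb.w0 t| * (M0 * φ t))
        + (m:ℝ) * (‖z.w t - zb.w t‖ * M0 + ‖zb.w t‖ * (M0 * φ t)) := by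
      rw [hsplit]
      exact (norm_add_le _ _).trans (add_le_add ((norm_add_le _ _).trans (add_le_add hb1 hb2))
        hb3)
    have hP : 0 ≤ φ t := hφ0 t
    have h4 : (0:ℝ) ≤ |z.w0 t - zb.w0 t| := abs_nonneg _
    have h5 : (0:ℝ) ≤ ‖z.w t - zb.w t‖ := norm_nonneg _
    have h6 : (0:ℝ) ≤ |zb.w0 t| := abs_nonneg _
    have h7 : (0:ℝ) ≤ ‖zb.w t‖ := norm_nonneg _
    have harith := aux_arith hM0nn hmR h4 h5 h6 h7 hP
    calc ‖hFz t - hFb t‖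
        ≤ (|z.w0 t - zb.w0 t| * M0 + |zb.w0 t| * (M0 * φ t))
          + (m:ℝ) * (‖z.w t - zb.w t‖ * M0 + ‖zb.w t‖ * (M0 * φ t)) := htot
      _ ≤ M0 * ((m:ℝ) + 1) * (|z.w0 t - zb.w0 t| + ‖z.w t - zb.w t‖)
          + M0 * ((m:ℝ) + 1) * (|zb.w0 t| + ‖zb.w t‖) * φ t := by linarith [harith]
      _ = mC * (|z.w0 t - zb.w0 t| + ‖z.w t - zb.w t‖) + k t * φ t := by
          simp only [hkdef, hmCdef]
  -- the Gronwall inequality hypothesis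
  have hφbd : ∃ Cb : ℝ, ∀ s, |φ s| ≤ Cb := by
    refine ⟨∫ t, ‖hFz t - hFb t‖, fun s => ?_⟩
    rw [abs_of_nonneg (hφ0 s)]
    rcases le_total 0 s with h | h
    · calc φ s ≤ ∫ t in (0:ℝ)..s, ‖hFz t - hFb t‖ :=
            intervalIntegral.norm_integral_le_integral_norm h
        _ = ∫ t in Ioc (0:ℝ) s, ‖hFz t - hFb t‖ := intervalIntegral.integral_of_le h
        _ ≤ ∫ t, ‖hFz t - hFb t‖ := setIntegral_le_integral (hFzI.sub hFbI).norm
            (Eventually.of_forall fun t => norm_nonneg _)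
    · rw [hφdef]
      simp only
      rw [intervalIntegral.integral_symm, norm_neg]
      calc ‖∫ t in s..(0:ℝ), (hFz t - hFb t)‖ ≤ ∫ t in s..(0:ℝ), ‖hFz t - hFb t‖ :=
            intervalIntegral.norm_integral_le_integral_norm h
        _ = ∫ t in Ioc s (0:ℝ), ‖hFz t - hFb t‖ := intervalIntegral.integral_of_le h
        _ ≤ ∫ t, ‖hFz t - hFb t‖ := setIntegral_le_integral (hFzI.sub hFbI).norm
            (Eventually.of_forall fun t => norm_nonneg _)
  obtain ⟨Cb, hCb⟩ := hφbd
  have hkφI : Integrable (fun t => k t * φ t) := by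
    have := hkI.bdd_mul (f := φ) hφcont.aestronglyMeasurable
      (c := Cb) (Eventually.of_forall fun t => by rw [Real.norm_eq_abs]; exact hCb t)
    exact this.congr (Eventually.of_forall fun t => by ring_nf)
  have hineq : ∀ s, 0 ≤ s → ∀ σ ∈ Icc (0:ℝ) s, φ σ ≤ a + ∫ t in (0:ℝ)..σ, k t * φ t := by
    intro s hs σ hσ
    have hσ0 : (0:ℝ) ≤ σ := hσ.1
    have h1 : φ σ ≤ ∫ t in (0:ℝ)..σ, ‖hFz t - hFb t‖ :=
      intervalIntegral.norm_integral_le_integral_norm hσ0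
    have h2 : (∫ t in (0:ℝ)..σ, ‖hFz t - hFb t‖)
        ≤ ∫ t in (0:ℝ)..σ, (mC * (|z.w0 t - zb.w0 t| + ‖z.w t - zb.w t‖) + k t * φ t) := by
      refine intervalIntegral.integral_mono_on hσ0 (hFzI.sub hFbI).norm.intervalIntegrable
        ((hΔI.const_mul mC).add hkφI).intervalIntegrable ?_
      intro t htt
      exact key t htt.1
    have h3 : (∫ t in (0:ℝ)..σ, (mC * (|z.w0 t - zb.w0 t| + ‖z.w t - zb.w t‖) + k t * φ t))
        = mC * (∫ t in (0:ℝ)..σ, (|z.w0 t - zb.w0 t| + ‖z.w t - zb.w t‖))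
          + ∫ t in (0:ℝ)..σ, k t * φ t := by
      rw [intervalIntegral.integral_add (hΔI.const_mul mC).intervalIntegrable
        hkφI.intervalIntegrable, intervalIntegral.integral_const_mul]
    have h4 : (∫ t in (0:ℝ)..σ, (|z.w0 t - zb.w0 t| + ‖z.w t - zb.w t‖)) ≤ D :=
      aux_integral_le hΔI hΔ0 hΔvan hσ0 hTm0
    have h5 : mC * (∫ t in (0:ℝ)..σ, (|z.w0 t - zb.w0 t| + ‖z.w t - zb.w t‖)) ≤ a :=
      mul_le_mul_of_nonneg_left h4 hmCpos.le
    linarith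
  -- exponent bound
  have hexpbd : ∀ s, 0 ≤ s →
      (∫ t in (0:ℝ)..s, k t) ≤ mC * (zb.y0 zb.S + zb.β zb.S) := by
    intro s hs
    have h1 : (∫ t in (0:ℝ)..s, k t)
        = mC * ∫ t in (0:ℝ)..s, (|zb.w0 t| + ‖zb.w t‖) := by
      rw [hkdef, intervalIntegral.integral_const_mul]
    have h2 : (∫ t in (0:ℝ)..s, (|zb.w0 t| + ‖zb.w t‖))
        ≤ ∫ t in (0:ℝ)..zb.S, (|zb.w0 t| + ‖zb.w t‖) := by
      refine aux_integral_le (hw0bI.abs.add hwbI.norm)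
        (fun t => add_nonneg (abs_nonneg _) (norm_nonneg _)) ?_ hs hSb0
      intro t ht
      have hv := hvanb t (fun hmem => (not_lt.2 ht) hmem.2)
      show |zb.w0 t| + ‖zb.w t‖ = 0
      rw [hv.1, hv.2]
      simp
    have h3 : (∫ t in (0:ℝ)..zb.S, (|zb.w0 t| + ‖zb.w t‖))
        = (∫ t in (0:ℝ)..zb.S, |zb.w0 t|) + ∫ t in (0:ℝ)..zb.S, ‖zb.w t‖ :=
      intervalIntegral.integral_add hw0bI.abs.intervalIntegrable
        hwbI.norm.intervalIntegrable
    have h4 : (∫ t in (0:ℝ)..zb.S, |zb.w0 t|) = ∫ t in (0:ℝ)..zb.S, zb.w0 t := by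
      refine intervalIntegral.integral_congr_ae ?_
      have haeb' : ∀ᵐ t ∂(volume : Measure ℝ), t ∈ Icc (0:ℝ) zb.S →
          (0 ≤ zb.w0 t ∧ zb.w t ∈ C) := by
        rw [← ae_restrict_iff' measurableSet_Icc]
        simpa [μres] using haeb
      filter_upwards [haeb'] with t ht hmem
      have ht' : t ∈ Icc (0:ℝ) zb.S := by
        rw [uIoc_of_le hSb0] at hmem
        exact ⟨hmem.1.le, hmem.2⟩
      exact abs_of_nonneg (ht ht').1
    have h5 : (∫ t in (0:ℝ)..zb.S, zb.w0 t) = zb.y0 zb.S := (hy0b zb.S hSb0).symm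
    have h6 : (∫ t in (0:ℝ)..zb.S, ‖zb.w t‖) = zb.β zb.S := (hβb zb.S hSb0).symm
    rw [h1]
    refine mul_le_mul_of_nonneg_left ?_ hmCpos.le
    rw [h3, h4, h5, h6] at h2
    exact h2
  -- conclude
  refine ⟨part1, part2, part3, part4, ?_⟩
  intro s hs
  have hgr := aux_gronwall hkI hk0 hφcont hφ0 ha0 hs (hineq s hs) s ⟨hs, le_rfl⟩
  have hφs : ‖z.y s - zb.y s‖ = φ s := by rw [hφeq s hs]
  rw [hφs]
  have hE1 : Real.exp (∫ t in (0:ℝ)..s, k t)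
      ≤ Real.exp (mC * (zb.y0 zb.S + zb.β zb.S)) := Real.exp_le_exp.2 (hexpbd s hs)
  have h7 : a * Real.exp (∫ t in (0:ℝ)..s, k t)
      ≤ a * Real.exp (mC * (zb.y0 zb.S + zb.β zb.S)) :=
    mul_le_mul_of_nonneg_left hE1 ha0
  have h8 : a * Real.exp (mC * (zb.y0 zb.S + zb.β zb.S))
      ≤ (mC * dtil z zb) * Real.exp (mC * (zb.y0 zb.S + zb.β zb.S)) := by
    refine mul_le_mul_of_nonneg_right ?_ (Real.exp_pos _).le
    rw [hadef]
    exact mul_le_mul_of_nonneg_left hDdtil hmCpos.le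
  calc φ s ≤ a * Real.exp (∫ t in (0:ℝ)..s, k t) := hgr
    _ ≤ a * Real.exp (mC * (zb.y0 zb.S + zb.β zb.S)) := h7
    _ ≤ (mC * dtil z zb) * Real.exp (mC * (zb.y0 zb.S + zb.β zb.S)) := h8
    _ = mC * Real.exp (mC * (zb.y0 zb.S + zb.β zb.S)) * dtil z zb := by ring
end

section
/- Let z̄ be a feasible extended process. Then at z̄ there is a local infimum gap with respect to (X^𝒮_{W̃₊}, d̃) if and only if at every extended process z̃ equivalent to z̄ there is a local infimum gap with respect to (X^𝒮_{W̃₊}, d̃). -/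
open MeasureTheory Set Filter
open scoped ENNReal InnerProductSpace BigOperators

section AuxL1
open scoped NNReal

/-- Lipschitz-on image of a null set is null (in ℝ). -/
lemma lipOn_image_null {K : NNReal} {f : ℝ → ℝ} {s N : Set ℝ}
    (h : LipschitzOnWith K f s) (hN : volume N = 0) : volume (f '' (N ∩ s)) = 0 := by
  have h' : LipschitzOnWith K f (N ∩ s) := h.mono inter_subset_right
  have h2 := h'.hausdorffMeasure_image_le (d := 1) zero_le_one
  rw [MeasureTheory.hausdorffMeasure_real] at h2
  have hNs : volume (N ∩ s) = 0 := measure_mono_null inter_subset_left hN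
  refine le_antisymm ?_ zero_le
  calc volume (f '' (N ∩ s)) ≤ (K:ℝ≥0∞) ^ (1:ℝ) * volume (N ∩ s) := h2
  _ = 0 := by rw [hNs, mul_zero]

lemma monotone_slope_nonneg {f : ℝ → ℝ} (h : Monotone f) {x y : ℝ} : 0 ≤ slope f x y := by
  rcases le_total x y with hxy | hxy
  · rw [slope_def_field]; exact div_nonneg (by simp [h hxy]) (by simp [hxy])
  · rw [slope_comm, slope_def_field]; exact div_nonneg (by simp [h hxy]) (by simp [hxy])

/-- Derivative of a monotone function is nonnegative (with junk value 0). -/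
lemma monotone_deriv_nonneg {f : ℝ → ℝ} (h : Monotone f) (t : ℝ) : 0 ≤ deriv f t := by
  by_cases hd : DifferentiableAt ℝ f t
  · have := hasDerivAt_iff_tendsto_slope.1 hd.hasDerivAt
    exact ge_of_tendsto this (Eventually.of_forall fun x => monotone_slope_nonneg h)
  · rw [deriv_zero_of_not_differentiableAt hd]

/-- slope-based derivative bounds from two-sided Lipschitz estimates on an interval. -/
lemma deriv_bounds_of_biLip {f : ℝ → ℝ} {a b l u d t : ℝ}
    (hd : HasDerivAt f d t) (ht : t ∈ Ioo a b)
    (h : ∀ x ∈ Icc a b, ∀ y ∈ Icc a b, l * |x - y| ≤ |f x - f y| ∧ |f x - f y| ≤ u * |x - y|) :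
    l ≤ |d| ∧ |d| ≤ u := by
  have hs := hasDerivAt_iff_tendsto_slope.1 hd
  have habs : Tendsto (fun x => |slope f t x|) (nhdsWithin t {t}ᶜ) (nhds |d|) :=
    (continuous_abs.tendsto d).comp hs
  have hev : ∀ᶠ x in nhdsWithin t {t}ᶜ, l ≤ |slope f t x| ∧ |slope f t x| ≤ u := by
    filter_upwards [nhdsWithin_le_nhds (Ioo_mem_nhds ht.1 ht.2),
      self_mem_nhdsWithin] with x hx hx'
    have hxt : x ≠ t := hx'
    have h1 := h x (Ioo_subset_Icc_self hx) t (Ioo_subset_Icc_self ht)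
    have hne : |x - t| ≠ 0 := by
      simp only [ne_eq, abs_eq_zero, sub_eq_zero]; exact hxt
    have habs : |slope f t x| = |f x - f t| / |x - t| := by
      rw [slope_comm, slope_def_field, abs_div, abs_sub_comm (f t), abs_sub_comm t]
    constructor
    · rw [habs, le_div_iff₀ (lt_of_le_of_ne (abs_nonneg _) (Ne.symm hne))]
      exact h1.1
    · rw [habs, div_le_iff₀ (lt_of_le_of_ne (abs_nonneg _) (Ne.symm hne))]
      calc |f x - f t| ≤ u * |x - t| := h1.2
      _ = u * |x - t| := rfl
  constructor
  · exact ge_of_tendsto habs (hev.mono fun x hx => hx.1)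
  · exact le_of_tendsto habs (hev.mono fun x hx => hx.2)

/-- Change of variables along a strictly monotone Lipschitz map fixing `0`. -/
lemma cov {E : Type*} [NormedAddCommGroup E] [NormedSpace ℝ E] [CompleteSpace E]
    {θ : ℝ → ℝ} {K : NNReal} (hmono : StrictMono θ) (hlip : LipschitzWith K θ)
    (hθ0 : θ 0 = 0) {t : ℝ} (ht : 0 ≤ t) (F : ℝ → E) :
    ∫ x in (0:ℝ)..(θ t), F x = ∫ r in (0:ℝ)..t, deriv θ r • F (θ r) := by
  have hθt : 0 ≤ θ t := hθ0 ▸ hmono.monotone ht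
  set s : Set ℝ := Ioo 0 t ∩ {r | DifferentiableAt ℝ θ r} with hs_def
  have hsm : MeasurableSet s :=
    measurableSet_Ioo.inter (measurableSet_of_differentiableAt ℝ θ)
  have hder : ∀ x ∈ s, HasDerivWithinAt θ (deriv θ x) s x :=
    fun x hx => hx.2.hasDerivAt.hasDerivWithinAt
  have hinj : InjOn θ s := Set.injOn_of_injective hmono.injective
  have key := integral_image_eq_integral_abs_deriv_smul hsm hder hinj F
  have hndnull : volume {r : ℝ | ¬ DifferentiableAt ℝ θ r} = 0 := by
    have := hlip.ae_differentiableAt (μ := volume)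
    rwa [← ae_iff] at *
  have hIccdiff : volume (Icc 0 t \ s) = 0 := by
    refine measure_mono_null (t := ({0, t} ∪ {r : ℝ | ¬ DifferentiableAt ℝ θ r})) ?_ ?_
    · intro x hx
      by_cases hd : DifferentiableAt ℝ θ x
      · left
        have hno : ¬ (0 < x ∧ x < t) := fun hc => hx.2 ⟨hc, hd⟩
        rcases hx.1 with ⟨hx0, hxt⟩
        rcases lt_or_eq_of_le hx0 with h0 | h0
        · rcases lt_or_eq_of_le hxt with h1 | h1
          · exact absurd ⟨h0, h1⟩ hno
          · simp [h1]
        · simp [← h0]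
      · exact mem_union_right _ hd
    · exact measure_union_null (((Set.finite_singleton t).insert 0).measure_zero _)
        hndnull
  have himgnull : volume (θ '' (Icc 0 t \ s)) = 0 := by
    have := lipOn_image_null (s := univ) hlip.lipschitzOnWith hIccdiff
    simpa using this
  have haeq1 : Ioc 0 (θ t) =ᵐ[volume] θ '' s := by
    rw [ae_eq_set]
    constructor
    · refine measure_mono_null ?_ himgnull
      intro x hx
      have hx1 : x ∈ θ '' Icc 0 t := by
        apply intermediate_value_Icc ht hlip.continuous.continuousOn
        rw [hθ0]; exact Ioc_subset_Icc_self hx.1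
      rw [image_diff hmono.injective]
      exact ⟨hx1, hx.2⟩
    · have : θ '' s ⊆ Ioc 0 (θ t) := by
        rintro x ⟨r, hr, rfl⟩
        exact ⟨hθ0 ▸ hmono hr.1.1, le_of_lt (hmono hr.1.2)⟩
      simp [diff_eq_empty.2 this]
  have haeq2 : Ioc 0 t =ᵐ[volume] s := by
    rw [ae_eq_set]
    constructor
    · refine measure_mono_null ?_ hIccdiff
      exact fun x hx => ⟨Ioc_subset_Icc_self hx.1, hx.2⟩
    · have : s ⊆ Ioc 0 t := fun x hx => Ioo_subset_Ioc_self hx.1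
      simp [diff_eq_empty.2 this]
  rw [intervalIntegral.integral_of_le hθt, intervalIntegral.integral_of_le ht,
    setIntegral_congr_set haeq1, setIntegral_congr_set haeq2, key]
  apply setIntegral_congr_fun hsm
  intro x _
  simp only [abs_of_nonneg (monotone_deriv_nonneg hmono.monotone x)]


lemma glue_one {f : ℝ → ℝ} {K c : ℝ}
    (h1 : ∀ a b, a ≤ b → b ≤ c → f b - f a ≤ K * (b - a))
    (h2 : ∀ a b, c ≤ a → a ≤ b → f b - f a ≤ K * (b - a)) :
    ∀ a b, a ≤ b → f b - f a ≤ K * (b - a) := by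
  intro a b hab
  rcases le_total b c with h | h
  · exact h1 a b hab h
  rcases le_total c a with h' | h'
  · exact h2 a b h' hab
  calc f b - f a = (f b - f c) + (f c - f a) := by ring
  _ ≤ K * (b - c) + K * (c - a) := add_le_add (h2 c b le_rfl h) (h1 a c h' le_rfl)
  _ = K * (b - a) := by ring

lemma glue_one' {f : ℝ → ℝ} {K c l : ℝ} (hlc : l ≤ c)
    (h1 : ∀ a b, l ≤ a → a ≤ b → b ≤ c → f b - f a ≤ K * (b - a))
    (h2 : ∀ a b, c ≤ a → a ≤ b → f b - f a ≤ K * (b - a)) :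
    ∀ a b, l ≤ a → a ≤ b → f b - f a ≤ K * (b - a) := by
  intro a b hla hab
  rcases le_total b c with h | h
  · exact h1 a b hla hab h
  rcases le_total c a with h' | h'
  · exact h2 a b h' hab
  calc f b - f a = (f b - f c) + (f c - f a) := by ring
  _ ≤ K * (b - c) + K * (c - a) := add_le_add (h2 c b le_rfl h) (h1 a c hla h' le_rfl)
  _ = K * (b - a) := by ring

lemma lipschitzWith_of_mono_bound {f : ℝ → ℝ} {K : ℝ} (hK : 0 ≤ K) (hm : Monotone f)
    (h : ∀ a b, a ≤ b → f b - f a ≤ K * (b - a)) : LipschitzWith K.toNNReal f := by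
  apply LipschitzWith.of_dist_le_mul
  intro x y
  rw [Real.coe_toNNReal K hK, Real.dist_eq, Real.dist_eq]
  rcases le_total x y with hxy | hxy
  · rw [abs_of_nonpos (by simp [hm hxy]), abs_of_nonpos (by simp [hxy])]
    have := h x y hxy; linarith
  · rw [abs_of_nonneg (by simp [hm hxy]), abs_of_nonneg (by simp [hxy])]
    have := h y x hxy; linarith

lemma transport {n m : ℕ} {f : Vec n → Vec n} {g : Fin m → Vec n → Vec n}
    {C : Set (Vec m)} {x0 : Vec n} (hCcone : IsConeIn C)
    {zb zt : RawProc n m} {σ : ℝ → ℝ}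
    (hzb : IsExtProcess f g C x0 zb) (hzt : IsExtProcess f g C x0 zt)
    (htc : TimeChangeOf zt zb σ) :
    (zt.y0 zt.S = zb.y0 zb.S ∧ zt.y zt.S = zb.y zb.S) ∧
    ∃ Kb : ℝ, 1 ≤ Kb ∧ ∀ z : RawProc n m, IsExtProcess f g C x0 z → IsEmbedded z →
      ∃ zh : RawProc n m, IsExtProcess f g C x0 zh ∧ IsEmbedded zh ∧
        zh.y0 zh.S = z.y0 z.S ∧ zh.y zh.S = z.y z.S ∧ zh.β zh.S = z.β z.S ∧
        dtil zh zb ≤ Kb * dtil z zt := by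
  classical
  obtain ⟨hmonoσ, himg, ⟨L1, hL1, L2, hbiσ⟩, haeσ, hstσ⟩ := htc
  have hztS : 0 < zt.S := hzt.1
  have hzbS : 0 < zb.S := hzb.1
  have hvanzt := hzt.2.2.2.2.2.2.1
  have hvanzb := hzb.2.2.2.2.2.2.1
  have h0m : (0:ℝ) ∈ Icc 0 zt.S := ⟨le_rfl, hztS.le⟩
  have hSm : zt.S ∈ Icc (0:ℝ) zt.S := ⟨hztS.le, le_rfl⟩
  have hσmem : ∀ s ∈ Icc (0:ℝ) zt.S, σ s ∈ Icc (0:ℝ) zb.S := fun s hs =>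
    himg ▸ mem_image_of_mem σ hs
  have hσ0 : σ 0 = 0 := by
    have h1 : (0:ℝ) ∈ σ '' Icc 0 zt.S := by rw [himg]; exact ⟨le_rfl, hzbS.le⟩
    obtain ⟨s0, hs0, hs0e⟩ := h1
    have h3 := hmonoσ.monotoneOn h0m hs0 hs0.1
    have h2 := (hσmem 0 h0m).1
    rw [hs0e] at h3
    linarith
  have hσS : σ zt.S = zb.S := by
    have h1 : zb.S ∈ σ '' Icc 0 zt.S := by rw [himg]; exact ⟨hzbS.le, le_rfl⟩
    obtain ⟨s0, hs0, hs0e⟩ := h1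
    have h3 := hmonoσ.monotoneOn hs0 hSm hs0.2
    have h2 := (hσmem zt.S hSm).2
    rw [hs0e] at h3
    linarith
  have hend : zt.y0 zt.S = zb.y0 zb.S ∧ zt.y zt.S = zb.y zb.S := by
    have h := hstσ zt.S hSm
    exact ⟨by rw [h.1, hσS], by rw [h.2.1, hσS]⟩
  have hL2pos : 0 < L2 := by
    have h := hbiσ 0 h0m zt.S hSm
    have e : |(0:ℝ) - zt.S| = zt.S := by rw [zero_sub, abs_neg, abs_of_pos hztS]
    rw [e] at h
    nlinarith [h.1, h.2, mul_pos hL1 hztS]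
  -- the inverse map τ of σ
  set τ : ℝ → ℝ := Function.invFunOn σ (Icc 0 zt.S) with hτdef
  have hτmem : ∀ t ∈ Icc (0:ℝ) zb.S, τ t ∈ Icc (0:ℝ) zt.S ∧ σ (τ t) = t := by
    intro t ht
    have hex : ∃ a ∈ Icc (0:ℝ) zt.S, σ a = t := by
      have h1 : t ∈ σ '' Icc 0 zt.S := by rw [himg]; exact ht
      exact h1
    exact ⟨Function.invFunOn_mem hex, Function.invFunOn_eq hex⟩
  have hτσ : ∀ s ∈ Icc (0:ℝ) zt.S, τ (σ s) = s := fun s hs =>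
    hmonoσ.injOn.leftInvOn_invFunOn hs
  have hτ0 : τ 0 = 0 := by have := hτσ 0 h0m; rwa [hσ0] at this
  have hτS : τ zb.S = zt.S := by have := hτσ zt.S hSm; rwa [hσS] at this
  have hτbi : ∀ t ∈ Icc (0:ℝ) zb.S, ∀ t' ∈ Icc (0:ℝ) zb.S,
      (1/L2) * |t - t'| ≤ |τ t - τ t'| ∧ |τ t - τ t'| ≤ (1/L1) * |t - t'| := by
    intro t ht t' ht'
    obtain ⟨htm, hte⟩ := hτmem t ht
    obtain ⟨htm', hte'⟩ := hτmem t' ht'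
    have h := hbiσ (τ t) htm (τ t') htm'
    rw [hte, hte'] at h
    constructor
    · calc (1/L2) * |t - t'| ≤ (1/L2) * (L2 * |τ t - τ t'|) :=
          mul_le_mul_of_nonneg_left h.2 (by positivity)
      _ = |τ t - τ t'| := by field_simp
    · calc |τ t - τ t'| = (1/L1) * (L1 * |τ t - τ t'|) := by field_simp
      _ ≤ (1/L1) * |t - t'| := mul_le_mul_of_nonneg_left h.1 (by positivity)
  have hτmono : StrictMonoOn τ (Icc 0 zb.S) := by
    intro a ha b hb hab
    by_contra hc
    push_neg at hc
    have h := hmonoσ.monotoneOn (hτmem b hb).1 (hτmem a ha).1 hc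
    rw [(hτmem a ha).2, (hτmem b hb).2] at h
    linarith
  -- the extended inverse θ
  set θ : ℝ → ℝ := fun t => if t < 0 then t else if t ≤ zb.S then τ t else zt.S + (t - zb.S)
    with hθdef
  have hθIcc : ∀ t ∈ Icc (0:ℝ) zb.S, θ t = τ t := by
    intro t ht
    simp only [hθdef]
    rw [if_neg (not_lt.2 ht.1), if_pos ht.2]
  have hθ0 : θ 0 = 0 := by rw [hθIcc 0 ⟨le_rfl, hzbS.le⟩, hτ0]
  have hθS : θ zb.S = zt.S := by rw [hθIcc zb.S ⟨hzbS.le, le_rfl⟩, hτS]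
  have hθbig : ∀ t, zb.S ≤ t → θ t = zt.S + (t - zb.S) := by
    intro t ht
    rcases eq_or_lt_of_le ht with h | h
    · rw [← h, hθS]; ring
    · simp only [hθdef]
      rw [if_neg (not_lt.2 (hzbS.le.trans ht)), if_neg (not_le.2 h)]
  have hθneg : ∀ t : ℝ, t ≤ 0 → θ t = t := by
    intro t ht
    rcases lt_or_eq_of_le ht with h | h
    · simp only [hθdef]; rw [if_pos h]
    · rw [h, hθ0]
  have hm1 : StrictMonoOn θ (Iic (0:ℝ)) := by
    intro a ha b hb hab
    rw [hθneg a ha, hθneg b hb]; exact hab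
  have hm2 : StrictMonoOn θ (Icc (0:ℝ) zb.S) := by
    intro a ha b hb hab
    rw [hθIcc a ha, hθIcc b hb]; exact hτmono ha hb hab
  have hm3 : StrictMonoOn θ (Ici zb.S) := by
    intro a ha b hb hab
    rw [hθbig a ha, hθbig b hb]; linarith
  have hm23 : StrictMonoOn θ (Ici (0:ℝ)) := by
    have h := hm2.union hm3 (isGreatest_Icc hzbS.le) isLeast_Ici
    rwa [Icc_union_Ici_eq_Ici hzbS.le] at h
  have hθmono : StrictMono θ := by
    have h := hm1.Iic_union_Ici hm23
    exact h
  set dhi : ℝ := max (1/L1) 1 with hdhidef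
  have hdhi1 : (1:ℝ) ≤ dhi := le_max_right _ _
  have hdhi0 : (0:ℝ) ≤ dhi := by linarith
  have hbound : ∀ a b : ℝ, a ≤ b → θ b - θ a ≤ dhi * (b - a) := by
    have p1 : ∀ a b : ℝ, a ≤ b → b ≤ 0 → θ b - θ a ≤ dhi * (b - a) := by
      intro a b hab hb
      rw [hθneg a (hab.trans hb), hθneg b hb]
      nlinarith
    have p2 : ∀ a b : ℝ, 0 ≤ a → a ≤ b → b ≤ zb.S → θ b - θ a ≤ dhi * (b - a) := by
      intro a b ha hab hb
      have hma : a ∈ Icc (0:ℝ) zb.S := ⟨ha, hab.trans hb⟩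
      have hmb : b ∈ Icc (0:ℝ) zb.S := ⟨ha.trans hab, hb⟩
      have h := (hτbi b hmb a hma).2
      rw [hθIcc a hma, hθIcc b hmb]
      have h2 : τ b - τ a ≤ |τ b - τ a| := le_abs_self _
      have h3 : |b - a| = b - a := abs_of_nonneg (by linarith)
      rw [h3] at h
      have h4 : (1/L1) * (b - a) ≤ dhi * (b - a) :=
        mul_le_mul_of_nonneg_right (le_max_left _ _) (by linarith)
      linarith
    have p3 : ∀ a b : ℝ, zb.S ≤ a → a ≤ b → θ b - θ a ≤ dhi * (b - a) := by
      intro a b ha hab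
      rw [hθbig a ha, hθbig b (ha.trans hab)]
      nlinarith
    exact glue_one p1 (glue_one' hzbS.le p2 p3)
  have hθlip : LipschitzWith dhi.toNNReal θ :=
    lipschitzWith_of_mono_bound hdhi0 hθmono.monotone hbound
  have hθcont : Continuous θ := hθlip.continuous
  have hσlipOn : LipschitzOnWith L2.toNNReal σ (Icc 0 zt.S) := by
    rw [lipschitzOnWith_iff_dist_le_mul]
    intro x hx y hy
    rw [Real.dist_eq, Real.dist_eq, Real.coe_toNNReal _ hL2pos.le]
    exact (hbiσ x hx y hy).2
  have hσθ : ∀ t ∈ Icc (0:ℝ) zb.S, σ (θ t) = t := fun t ht => by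
    rw [hθIcc t ht]; exact (hτmem t ht).2
  have hθmemIcc : ∀ t ∈ Icc (0:ℝ) zb.S, θ t ∈ Icc (0:ℝ) zt.S := fun t ht => by
    rw [hθIcc t ht]; exact (hτmem t ht).1
  have hPB : ∀ N : Set ℝ, volume N = 0 → volume {t : ℝ | 0 ≤ t ∧ θ t ∈ N} = 0 := by
    intro N hN
    have hsub : {t : ℝ | 0 ≤ t ∧ θ t ∈ N} ⊆
        (σ '' (N ∩ Icc 0 zt.S)) ∪ ((fun u : ℝ => u + (zt.S - zb.S)) ⁻¹' N) := by
      rintro t ⟨ht0, htN⟩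
      rcases le_total t zb.S with h | h
      · exact Or.inl ⟨θ t, ⟨htN, hθmemIcc t ⟨ht0, h⟩⟩, hσθ t ⟨ht0, h⟩⟩
      · refine Or.inr ?_
        have e : t + (zt.S - zb.S) = θ t := by rw [hθbig t h]; ring
        show t + (zt.S - zb.S) ∈ N
        rw [e]; exact htN
    apply measure_mono_null hsub
    apply measure_union_null
    · exact lipOn_image_null hσlipOn hN
    · exact (measurePreserving_add_right volume
        (zt.S - zb.S)).quasiMeasurePreserving.preimage_null hN
  have hpull : ∀ (S : ℝ) (Q : ℝ → Prop), (∀ᵐ s ∂μres S, Q s) →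
      ∀ᵐ t : ℝ, 0 ≤ t → θ t ∈ Icc 0 S → Q (θ t) := by
    intro S Q hQ
    rw [μres, ae_restrict_iff' measurableSet_Icc] at hQ
    rw [ae_iff] at hQ ⊢
    apply measure_mono_null _ (hPB _ hQ)
    intro t ht
    simp only [mem_setOf_eq, not_forall] at ht ⊢
    obtain ⟨h0, hmem, hq⟩ := ht
    exact ⟨h0, hmem, hq⟩
  have hRad : ∀ᵐ t : ℝ, DifferentiableAt ℝ θ t := hθlip.ae_differentiableAt
  have hσae' : ∀ᵐ t : ℝ, 0 ≤ t → θ t ∈ Icc 0 zt.S →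
      (DifferentiableAt ℝ σ (θ t) ∧ zt.w0 (θ t) = zb.w0 (σ (θ t)) * deriv σ (θ t) ∧
        zt.w (θ t) = deriv σ (θ t) • zb.w (σ (θ t))) := hpull zt.S _ haeσ
  set dlo : ℝ := min (1/L2) 1 with hdlodef
  have hdlopos : 0 < dlo := lt_min (by positivity) one_pos
  have hDnn : ∀ t, 0 ≤ deriv θ t := monotone_deriv_nonneg hθmono.monotone
  have hD1 : ∀ t, zb.S < t → deriv θ t = 1 := by
    intro t ht
    have hev : θ =ᶠ[nhds t] (fun u => zt.S + (u - zb.S)) := by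
      filter_upwards [Ioi_mem_nhds ht] with u hu
      exact hθbig u (le_of_lt hu)
    have haff : HasDerivAt θ 1 t := by
      rw [hev.hasDerivAt_iff]
      simpa using ((hasDerivAt_id t).sub_const zb.S).const_add zt.S
    exact haff.deriv
  have hR : ∀ᵐ t : ℝ,
      (t ∈ Ioo 0 zb.S →
        (zb.w0 t = zt.w0 (θ t) * deriv θ t ∧ zb.w t = deriv θ t • zt.w (θ t))) ∧
      ((0 < t ∧ t ≠ zb.S) → dlo ≤ deriv θ t ∧ deriv θ t ≤ dhi) := by
    filter_upwards [hRad, hσae'] with t hdt hσt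
    have hbnds : t ∈ Ioo 0 zb.S → dlo ≤ deriv θ t ∧ deriv θ t ≤ dhi := by
      intro ht
      have h := deriv_bounds_of_biLip hdt.hasDerivAt ht (fun x hx y hy => by
        rw [hθIcc x hx, hθIcc y hy]; exact hτbi x hx y hy)
      rw [abs_of_nonneg (hDnn t)] at h
      exact ⟨le_trans (min_le_left _ _) h.1, le_trans h.2 (le_max_left _ _)⟩
    constructor
    · intro ht
      have htIcc : t ∈ Icc (0:ℝ) zb.S := Ioo_subset_Icc_self ht
      obtain ⟨hdσ, hw0rel, hwrel⟩ := hσt ht.1.le (hθmemIcc t htIcc)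
      rw [hσθ t htIcc] at hw0rel hwrel
      have hid : HasDerivAt (σ ∘ θ) 1 t := by
        have hev : (σ ∘ θ) =ᶠ[nhds t] id := by
          filter_upwards [Ioo_mem_nhds ht.1 ht.2] with u hu
          exact hσθ u (Ioo_subset_Icc_self hu)
        rw [hev.hasDerivAt_iff]
        exact hasDerivAt_id t
      have hcomp : HasDerivAt (σ ∘ θ) (deriv σ (θ t) * deriv θ t) t :=
        (hdσ.hasDerivAt).comp t hdt.hasDerivAt
      have hprod : deriv σ (θ t) * deriv θ t = 1 := hcomp.unique hid
      constructor
      · rw [hw0rel, mul_assoc, hprod, mul_one]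
      · rw [hwrel, smul_smul, mul_comm, hprod, one_smul]
    · rintro ⟨ht0, htne⟩
      rcases lt_or_gt_of_ne htne with hlt | hgt
      · exact hbnds ⟨ht0, hlt⟩
      · rw [hD1 t hgt]
        exact ⟨min_le_right _ _, hdhi1⟩
  refine ⟨hend, max L2 1, le_max_right _ _, ?_⟩
  intro z hz hembz
  obtain ⟨hzS, hw0m, hwm, ⟨Mz, hMz⟩, hsgn, ⟨cz, hcz, hess⟩, hvan, hy0eq, hyeq, hβeq, hconst⟩ := hz
  set σe : ℝ → ℝ := fun x => if x ≤ zt.S then σ x else zb.S + (x - zt.S) with hσedef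
  have hσeS : σe zt.S = zb.S := by simp only [hσedef, if_pos le_rfl, hσS]
  have hθσe : ∀ x : ℝ, 0 < x → θ (σe x) = x := by
    intro x hx
    by_cases h : x ≤ zt.S
    · have hxm : x ∈ Icc (0:ℝ) zt.S := ⟨hx.le, h⟩
      have e : σe x = σ x := if_pos h
      rw [e, hθIcc (σ x) (hσmem x hxm), hτσ x hxm]
    · push_neg at h
      have e : σe x = zb.S + (x - zt.S) := if_neg (not_le.2 h)
      have h2 : zb.S ≤ zb.S + (x - zt.S) := by linarith
      rw [e, hθbig _ h2]; ring
  set Sh : ℝ := σe z.S with hShdef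
  have hθSh : θ Sh = z.S := hθσe z.S hzS
  have hShpos : 0 < Sh := by
    by_contra hc
    push_neg at hc
    have h := hθmono.monotone hc
    rw [hθSh, hθ0] at h
    linarith
  have hDnn' : ∀ t, 0 ≤ deriv θ t := hDnn
  set zh : RawProc n m :=
    ⟨Sh, fun t => deriv θ t * z.w0 (θ t), fun t => deriv θ t • z.w (θ t),
      fun t => z.y0 (θ t), fun t => z.y (θ t), fun t => z.β (θ t)⟩ with hzhdef
  have hθmapsz : ∀ t ∈ Icc (0:ℝ) Sh, θ t ∈ Icc (0:ℝ) z.S := by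
    intro t ht
    constructor
    · rw [← hθ0]; exact hθmono.monotone ht.1
    · rw [← hθSh]; exact hθmono.monotone ht.2
  have hθmeas : Measurable θ := hθcont.measurable
  have hDmeas : Measurable (deriv θ) := measurable_deriv θ
  have hzbnd := hpull z.S _ hMz
  have hzsgn := hpull z.S _ hsgn
  have hzess := hpull z.S _ hess
  have hzemb := hpull z.S _ hembz
  have hcoSet : ∀ᵐ t : ℝ, t ≠ 0 ∧ t ≠ zb.S := by
    have hnull : volume ({0, zb.S} : Set ℝ) = 0 :=
      ((Set.finite_singleton zb.S).insert 0).measure_zero _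
    rw [ae_iff]
    apply measure_mono_null _ hnull
    intro t ht
    simp only [mem_setOf_eq, not_and_or, not_not] at ht
    simp only [mem_insert_iff, mem_singleton_iff]
    tauto
  have hAE : ∀ᵐ t ∂μres Sh,
      (dlo ≤ deriv θ t ∧ deriv θ t ≤ dhi) ∧
      (0 ≤ z.w0 (θ t) ∧ z.w (θ t) ∈ C) ∧ (cz ≤ z.w0 (θ t) + ‖z.w (θ t)‖) ∧
      (|z.w0 (θ t)| + ‖z.w (θ t)‖ ≤ Mz) ∧ 0 < z.w0 (θ t) := by
    rw [μres, ae_restrict_iff' measurableSet_Icc]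
    filter_upwards [hR, hcoSet, hzbnd, hzsgn, hzess, hzemb] with t h1 h2 h3 h4 h5 h6 ht
    have h0t : 0 < t := lt_of_le_of_ne ht.1 (Ne.symm h2.1)
    have hmem := hθmapsz t ht
    exact ⟨h1.2 ⟨h0t, h2.2⟩, h4 h0t.le hmem, h5 h0t.le hmem, h3 h0t.le hmem, h6 h0t.le hmem⟩
  have hwnorm : ∀ t, ‖deriv θ t • z.w (θ t)‖ = deriv θ t * ‖z.w (θ t)‖ := by
    intro t
    rw [norm_smul, Real.norm_eq_abs, abs_of_nonneg (hDnn t)]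
  have hext : IsExtProcess f g C x0 zh := by
    refine ⟨hShpos, hDmeas.mul (hw0m.comp hθmeas), hDmeas.smul (hwm.comp hθmeas),
      ⟨dhi * max Mz 0, ?_⟩, ?_, ⟨dlo * cz, by positivity, ?_⟩, ?_, ?_, ?_, ?_, ?_⟩
    · filter_upwards [hAE] with t h
      have hnn : 0 ≤ |z.w0 (θ t)| + ‖z.w (θ t)‖ := by positivity
      calc |zh.w0 t| + ‖zh.w t‖
          = deriv θ t * (|z.w0 (θ t)| + ‖z.w (θ t)‖) := by
            show |deriv θ t * z.w0 (θ t)| + ‖deriv θ t • z.w (θ t)‖ = _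
            rw [abs_mul, abs_of_nonneg (hDnn t), hwnorm, mul_add]
      _ ≤ dhi * max Mz 0 :=
            mul_le_mul h.1.2 (le_trans h.2.2.2.1 (le_max_left _ _)) hnn hdhi0
    · filter_upwards [hAE] with t h
      exact ⟨mul_nonneg (hDnn t) h.2.1.1, hCcone (deriv θ t) (hDnn t) _ h.2.1.2⟩
    · filter_upwards [hAE] with t h
      have e : zh.w0 t + ‖zh.w t‖ = deriv θ t * (z.w0 (θ t) + ‖z.w (θ t)‖) := by
        show deriv θ t * z.w0 (θ t) + ‖deriv θ t • z.w (θ t)‖ = _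
        rw [hwnorm, mul_add]
      rw [e]
      exact mul_le_mul h.1.1 h.2.2.1 hcz.le (le_trans hdlopos.le h.1.1)
    · intro s hs
      rcases le_or_gt 0 s with h0 | h0
      · have hSle : Sh ≤ s := by
          by_contra hc
          push_neg at hc
          exact hs ⟨h0, hc⟩
        have hmem : θ s ∉ Ico (0:ℝ) z.S := by
          intro hc
          have h2 : z.S ≤ θ s := by rw [← hθSh]; exact hθmono.monotone hSle
          exact absurd hc.2 (not_lt.2 h2)
        have hv := hvan (θ s) hmem
        show deriv θ s * z.w0 (θ s) = 0 ∧ deriv θ s • z.w (θ s) = 0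
        rw [hv.1, hv.2]
        exact ⟨mul_zero _, smul_zero _⟩
      · have hmem : θ s ∉ Ico (0:ℝ) z.S := by
          rw [hθneg s h0.le]
          intro hc
          exact absurd hc.1 (not_le.2 h0)
        have hv := hvan (θ s) hmem
        show deriv θ s * z.w0 (θ s) = 0 ∧ deriv θ s • z.w (θ s) = 0
        rw [hv.1, hv.2]
        exact ⟨mul_zero _, smul_zero _⟩
    · intro s hs
      show z.y0 (θ s) = ∫ t in (0:ℝ)..s, deriv θ t * z.w0 (θ t)
      rw [hy0eq (θ s) (hθmapsz s hs), cov hθmono hθlip hθ0 hs.1]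
      simp only [smul_eq_mul]
    · intro s hs
      show z.y (θ s) = x0 + ∫ t in (0:ℝ)..s,
        ((deriv θ t * z.w0 (θ t)) • f (z.y (θ t)) +
          ∑ i, (deriv θ t • z.w (θ t)) i • g i (z.y (θ t)))
      rw [hyeq (θ s) (hθmapsz s hs),
        cov hθmono hθlip hθ0 hs.1
          (fun u => z.w0 u • f (z.y u) + ∑ i, z.w u i • g i (z.y u))]
      congr 1
      apply intervalIntegral.integral_congr
      intro r _
      simp only [smul_add, Finset.smul_sum, smul_smul, PiLp.smul_apply, smul_eq_mul]
    · intro s hs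
      show z.β (θ s) = ∫ t in (0:ℝ)..s, ‖deriv θ t • z.w (θ t)‖
      rw [hβeq (θ s) (hθmapsz s hs), cov hθmono hθlip hθ0 hs.1 (fun u => ‖z.w u‖)]
      apply intervalIntegral.integral_congr
      intro r _
      simp only [hwnorm, smul_eq_mul]
    · intro s hsS
      have h2 : z.S ≤ θ s := by rw [← hθSh]; exact hθmono.monotone hsS
      have hc1 := hconst (θ s) h2
      have hc2 := hconst (θ Sh) (le_of_eq hθSh.symm)
      show z.y0 (θ s) = z.y0 (θ Sh) ∧ z.y (θ s) = z.y (θ Sh) ∧ z.β (θ s) = z.β (θ Sh)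
      rw [hc1.1, hc1.2.1, hc1.2.2, hc2.1, hc2.2.1, hc2.2.2]
      exact ⟨rfl, rfl, rfl⟩
  have hemb : IsEmbedded zh := by
    show ∀ᵐ t ∂μres Sh, 0 < deriv θ t * z.w0 (θ t)
    filter_upwards [hAE] with t h
    exact mul_pos (lt_of_lt_of_le hdlopos h.1.1) h.2.2.2.2
  have hendz : zh.y0 zh.S = z.y0 z.S ∧ zh.y zh.S = z.y z.S ∧ zh.β zh.S = z.β z.S := by
    refine ⟨?_, ?_, ?_⟩ <;> · show _ = _; rw [show zh.S = Sh from rfl]; simp only [hzhdef, hθSh]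
  -- distance estimate
  have hKb1 : (1:ℝ) ≤ max L2 1 := le_max_right _ _
  have hσeinc : ∀ a b : ℝ, 0 ≤ a → a ≤ b →
      σe b - σe a ≤ max L2 1 * (b - a) ∧ 0 ≤ σe b - σe a := by
    intro a b ha hab
    by_cases hb : b ≤ zt.S
    · have hma : a ∈ Icc (0:ℝ) zt.S := ⟨ha, hab.trans hb⟩
      have hmb : b ∈ Icc (0:ℝ) zt.S := ⟨ha.trans hab, hb⟩
      have e1 : σe a = σ a := if_pos hma.2
      have e2 : σe b = σ b := if_pos hb
      have hmono := hmonoσ.monotoneOn hma hmb hab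
      have h := (hbiσ b hmb a hma).2
      rw [abs_of_nonneg (by linarith : (0:ℝ) ≤ σ b - σ a),
        abs_of_nonneg (by linarith : (0:ℝ) ≤ b - a)] at h
      refine ⟨?_, by rw [e1, e2]; linarith⟩
      rw [e1, e2]
      calc σ b - σ a ≤ L2 * (b - a) := h
      _ ≤ max L2 1 * (b - a) := mul_le_mul_of_nonneg_right (le_max_left _ _) (by linarith)
    · push_neg at hb
      have e2 : σe b = zb.S + (b - zt.S) := if_neg (not_le.2 hb)
      by_cases ha' : a ≤ zt.S
      · have hma : a ∈ Icc (0:ℝ) zt.S := ⟨ha, ha'⟩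
        have e1 : σe a = σ a := if_pos ha'
        have hmono := hmonoσ.monotoneOn hma hSm ha'
        have h := (hbiσ zt.S hSm a hma).2
        rw [abs_of_nonneg (by linarith : (0:ℝ) ≤ σ zt.S - σ a),
          abs_of_nonneg (by linarith : (0:ℝ) ≤ zt.S - a)] at h
        rw [hσS] at hmono h
        have h4 : L2 * (zt.S - a) ≤ max L2 1 * (zt.S - a) :=
          mul_le_mul_of_nonneg_right (le_max_left _ _) (by linarith)
        have h5 : b - zt.S ≤ max L2 1 * (b - zt.S) :=
          le_mul_of_one_le_left (by linarith) hKb1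
        have h6 : max L2 1 * (b - a) = max L2 1 * (zt.S - a) + max L2 1 * (b - zt.S) := by
          ring
        refine ⟨?_, by rw [e1, e2]; linarith⟩
        rw [e1, e2]
        linarith
      · push_neg at ha'
        have e1 : σe a = zb.S + (a - zt.S) := if_neg (not_le.2 ha')
        have h5 : b - a ≤ max L2 1 * (b - a) := le_mul_of_one_le_left (by linarith) hKb1
        exact ⟨by rw [e1, e2]; linarith, by rw [e1, e2]; linarith⟩
  have hpart1 : |Sh - zb.S| ≤ max L2 1 * |z.S - zt.S| := by
    rcases le_total z.S zt.S with h | h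
    · obtain ⟨hle, hnn⟩ := hσeinc z.S zt.S hzS.le h
      rw [hσeS] at hle hnn
      rw [abs_of_nonpos (by linarith), abs_of_nonpos (by linarith)]
      have e : max L2 1 * -(z.S - zt.S) = max L2 1 * (zt.S - z.S) := by ring
      rw [e]
      linarith
    · obtain ⟨hle, hnn⟩ := hσeinc zt.S z.S hztS.le h
      rw [hσeS] at hle hnn
      rw [abs_of_nonneg (by linarith), abs_of_nonneg (by linarith)]
      linarith
  set G : ℝ → ℝ := fun u => |z.w0 u - zt.w0 u| + ‖z.w u - zt.w u‖ with hGdef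
  set Mx : ℝ := max Sh zb.S with hMxdef
  have hMx0 : 0 ≤ Mx := le_trans hzbS.le (le_max_right _ _)
  have hθMx : θ Mx = max z.S zt.S := by
    rw [hMxdef, hθmono.monotone.map_max, hθSh, hθS]
  have hint : (∫ t in (0:ℝ)..Mx, (|zh.w0 t - zb.w0 t| + ‖zh.w t - zb.w t‖))
      = ∫ u in (0:ℝ)..(max z.S zt.S), G u := by
    rw [← hθMx, cov hθmono hθlip hθ0 hMx0 G]
    apply intervalIntegral.integral_congr_ae
    filter_upwards [hR, hcoSet] with t h1 h2 hmem
    have h0t : 0 < t := by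
      rw [Set.uIoc_of_le hMx0] at hmem
      exact hmem.1
    show |deriv θ t * z.w0 (θ t) - zb.w0 t| + ‖deriv θ t • z.w (θ t) - zb.w t‖
        = deriv θ t • G (θ t)
    rcases lt_or_gt_of_ne h2.2 with hlt | hgt
    · obtain ⟨hw0r, hwr⟩ := h1.1 ⟨h0t, hlt⟩
      simp only [hGdef]
      rw [hw0r, hwr,
        show deriv θ t * z.w0 (θ t) - zt.w0 (θ t) * deriv θ t
          = deriv θ t * (z.w0 (θ t) - zt.w0 (θ t)) by ring,
        ← smul_sub, abs_mul, abs_of_nonneg (hDnn t), norm_smul, Real.norm_eq_abs,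
        abs_of_nonneg (hDnn t), smul_eq_mul, mul_add]
    · have hD := hD1 t hgt
      have hzb0 := hvanzb t (by intro hc; exact absurd hc.2 (not_lt.2 hgt.le))
      have hθgt : zt.S < θ t := by
        rw [hθbig t hgt.le]; linarith
      have hzt0 := hvanzt (θ t) (by intro hc; exact absurd hc.2 (not_lt.2 hθgt.le))
      simp only [hGdef]
      rw [hzb0.1, hzb0.2, hzt0.1, hzt0.2, hD]
      simp
  refine ⟨zh, hext, hemb, hendz.1, hendz.2.1, hendz.2.2, ?_⟩
  have hI2 : 0 ≤ ∫ u in (0:ℝ)..(max z.S zt.S), G u :=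
    intervalIntegral.integral_nonneg (le_trans hztS.le (le_max_right _ _))
      (fun u _ => by simp only [hGdef]; positivity)
  have hI2' : (∫ u in (0:ℝ)..(max z.S zt.S), G u)
      ≤ max L2 1 * ∫ u in (0:ℝ)..(max z.S zt.S), G u :=
    le_mul_of_one_le_left hI2 hKb1
  have hgoal : dtil zh zb = |Sh - zb.S| + ∫ u in (0:ℝ)..(max z.S zt.S), G u := by
    rw [dtil, ← hint]
  have hgoal2 : dtil z zt = |z.S - zt.S| + ∫ u in (0:ℝ)..(max z.S zt.S), G u := by
    rw [dtil]
  rw [hgoal, hgoal2, mul_add]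
  exact add_le_add hpart1 hI2'
end AuxL1

/-- Lemma L1. At a feasible extended process `z̄` there is a local
infimum gap w.r.t. `(X^𝒮_{W̃₊}, d̃)` iff at every extended process equivalent to `z̄`
there is a local infimum gap w.r.t. `(X^𝒮_{W̃₊}, d̃)`. -/
theorem stmt_1 {n m : ℕ} (f : Vec n → Vec n) (g : Fin m → Vec n → Vec n)
    (C : Set (Vec m)) (x0 : Vec n)
    (hdyn : GoodDyn f g) (hCclosed : IsClosed C) (hCcone : IsConeIn C)
    (Tgt : Set (ℝ × Vec n)) (hTgt : IsClosed Tgt) (hTgt0 : ∀ e ∈ Tgt, 0 ≤ e.1)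
    (K : ℝ≥0∞) (hK : 0 < K) (Ψ : ℝ × Vec n → ℝ) (hΨ : ContDiff ℝ 1 Ψ)
    (zb : RawProc n m) (hzb : IsExtProcess f g C x0 zb) (hfeas : Feasible Tgt K zb) :
    GapTil f g C x0 Tgt K Ψ zb ↔
      ∀ zt : RawProc n m, IsExtProcess f g C x0 zt → EquivProc zt zb →
        GapTil f g C x0 Tgt K Ψ zt := by
  constructor
  · intro hgap zt hzt hequiv
    obtain ⟨σ, htc⟩ := hequiv
    obtain ⟨hend, Kb, hKb1, hmain⟩ := transport hCcone hzb hzt htc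
    obtain ⟨r, hr, ε, hε, hg⟩ := hgap
    refine ⟨r / Kb, div_pos hr (by linarith), ε, hε, ?_⟩
    intro z hz hembz hfz hd
    obtain ⟨zh, hzh, hzhemb, he0, he1, he2, hdle⟩ := hmain z hz hembz
    have hfzh : Feasible Tgt K zh := by
      constructor
      · rw [he0, he1]
        exact hfz.1
      · rw [he2]; exact hfz.2
    have hdzh : dtil zh zb < r := by
      have h1 : Kb * dtil z zt < Kb * (r / Kb) :=
        mul_lt_mul_of_pos_left hd (by linarith)
      rw [mul_div_cancel₀ _ (by linarith : Kb ≠ 0)] at h1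
      linarith
    have h2 := hg zh hzh hzhemb hfzh hdzh
    rw [he0, he1] at h2
    rw [hend.1, hend.2]
    exact h2
  · intro hall
    apply hall zb hzb
    refine ⟨id, ?_, ?_, ⟨1, one_pos, 1, ?_⟩, ?_, ?_⟩
    · exact fun a _ b _ h => h
    · simp
    · intro s _ t _
      simp
    · apply Filter.Eventually.of_forall
      intro s
      refine ⟨differentiableAt_id, ?_, ?_⟩ <;> simp
    · exact fun s _ => ⟨rfl, rfl, rfl⟩
end
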